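/- arXiv:2104.14141 — 7 statements merged into one kernel-verified Lean document; each statement's English description precedes it below -/
import Mathlib

section
/- For integers r ≥ 2, s ≥ r+1 and any (r+1)-element subset I of {1,…,s}, the quadratic forms q₁ and q_{r−1} are invariant under the corresponding Cremona transformations: for every divisor class D = (d, m), q₁(φ_I(D)) = q₁(D), and for every curve class c = (d′, m′), q_{r−1}(φ_I(c)) = q_{r−1}(c). -/
/-- Cremona transformation of curve classes. -/
def cremonaCurve (r : ℕ) {s : ℕ} (I : Finset (Fin s)) (c : ℤ × (Fin s → ℤ)) :
    ℤ × (Fin s → ℤ) :=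
  let t : ℤ := c.1 - ∑ i ∈ I, c.2 i
  (c.1 + ((r : ℤ) - 1) * t, fun i => if i ∈ I then c.2 i + t else c.2 i)

/-- Cremona transformation of divisor classes. -/
def cremonaDivisor (r : ℕ) {s : ℕ} (I : Finset (Fin s)) (D : ℤ × (Fin s → ℤ)) :
    ℤ × (Fin s → ℤ) :=
  let t : ℤ := ((r : ℤ) - 1) * D.1 - ∑ i ∈ I, D.2 i
  (D.1 + t, fun i => if i ∈ I then D.2 i + t else D.2 i)

/-- The quadratic form `q₁(d, m) = (r−1)d² − Σᵢ mᵢ²` on divisor classes. -/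
def qDiv (r : ℕ) {s : ℕ} (D : ℤ × (Fin s → ℤ)) : ℤ :=
  ((r : ℤ) - 1) * D.1 ^ 2 - ∑ i, (D.2 i) ^ 2

/-- The quadratic form `q_{r−1}(d′, m′) = d′² − (r−1)Σᵢ m′ᵢ²` on curve classes. -/
def qCurve (r : ℕ) {s : ℕ} (c : ℤ × (Fin s → ℤ)) : ℤ :=
  c.1 ^ 2 - ((r : ℤ) - 1) * ∑ i, (c.2 i) ^ 2

lemma sum_sq_shift {s : ℕ} (I : Finset (Fin s)) (m : Fin s → ℤ) (t : ℤ) :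
    ∑ i, (if i ∈ I then m i + t else m i) ^ 2
      = ∑ i, m i ^ 2 + 2 * t * ∑ i ∈ I, m i + I.card * t ^ 2 := by
  rw [← Finset.sum_add_sum_compl I (fun i => (if i ∈ I then m i + t else m i) ^ 2),
    ← Finset.sum_add_sum_compl I (fun i => m i ^ 2)]
  have h1 : ∑ i ∈ I, (if i ∈ I then m i + t else m i) ^ 2
      = ∑ i ∈ I, (m i ^ 2 + 2 * t * m i + t ^ 2) := by
    apply Finset.sum_congr rfl; intro i hi; simp [hi]; ring
  have h2 : ∑ i ∈ Iᶜ, (if i ∈ I then m i + t else m i) ^ 2 = ∑ i ∈ Iᶜ, m i ^ 2 := by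
    apply Finset.sum_congr rfl; intro i hi
    simp [Finset.mem_compl.mp hi]
  rw [h1, h2, Finset.sum_add_distrib, Finset.sum_add_distrib, Finset.sum_const,
    ← Finset.mul_sum]
  push_cast
  ring

/-- For r ≥ 2, s ≥ r+1 and any (r+1)-element subset I, the quadratic forms q₁ and q_{r−1}
are invariant under the corresponding Cremona transformations. -/
theorem quadratic_forms_cremona_invariant (r s : ℕ) (hr : 2 ≤ r) (hs : r + 1 ≤ s)
    (I : Finset (Fin s)) (hI : I.card = r + 1) :
    (∀ D : ℤ × (Fin s → ℤ), qDiv r (cremonaDivisor r I D) = qDiv r D) ∧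
    (∀ c : ℤ × (Fin s → ℤ), qCurve r (cremonaCurve r I c) = qCurve r c) := by
  constructor
  · intro D
    obtain ⟨d, m⟩ := D
    simp only [qDiv, cremonaDivisor]
    rw [sum_sq_shift, hI]
    push_cast
    ring
  · intro c
    obtain ⟨d, m⟩ := c
    simp only [qCurve, cremonaCurve]
    rw [sum_sq_shift, hI]
    push_cast
    ring
end

section
/- Let r ≥ 2, s = r+3 and j ∈ {−1, 0}. There is no curve class c = (d, m) with d ≥ 2, multiplicities in decreasing order m_1 ≥ m_2 ≥ ⋯ ≥ m_s ≥ 0, satisfying d ≥ m_1 + ⋯ + m_{r+1} (Cremona reduced) and (r+1)d − (r−1)Σ_{i=1}^{s} m_i = 2 + j(r−1). Consequently, every Cremona reduced numerical (j)-class with nonnegative decreasing multiplicities and positive degree has d = 1 and Σ_i m_i = 1 − j, i.e., it is the class of a line through 1 − j of the points. -/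
/-!
Averaging over the decreasing multiplicities, the `r + 1` largest ones carry at least a
`(r + 1)/(r + 3)` share of `Σ mᵢ`, so for a Cremona reduced class
`(r + 1) Σ mᵢ ≤ (r + 3) d`. Multiplying the numerical condition by `r + 1` then gives
`4d ≤ (r + 1)(2 + j(r − 1)) ≤ 2(r + 1)`. Each of the last two multiplicities is at most
`d/(r + 1) ≤ 1/2`, hence zero, so `Σ mᵢ ≤ d` and the numerical condition forces
`2d ≤ 2 + j(r − 1) ≤ 2`, contradicting `d ≥ 2`.
-/

open Finset

namespace Fin

variable {n k : ℕ}

theorem card_nsmul_le_sum_filter_val_lt {α : Type*} [AddCommMonoid α] [PartialOrder α]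
    [IsOrderedAddMonoid α] {m : Fin n → α} (hm : Antitone m) {i : Fin n} (hi : k ≤ i) :
    k • m i ≤ ∑ j ∈ univ.filter (fun j : Fin n => (j : ℕ) < k), m j := by
  have hcard : #(univ.filter (fun j : Fin n => (j : ℕ) < k)) = k := by
    rw [card_filter_val_lt]; omega
  simpa only [hcard] using card_nsmul_le_sum (univ.filter (fun j : Fin n => (j : ℕ) < k)) m (m i)
    fun j hj => hm (Fin.le_def.mpr (by have := (mem_filter.mp hj).2; omega))

theorem mul_sum_le_mul_sum_filter_val_lt {α : Type*} [CommRing α] [LinearOrder α]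
    [IsStrictOrderedRing α] {m : Fin n → α} (hm : Antitone m) (hk : k ≤ n) :
    k * ∑ i, m i ≤ n * ∑ i ∈ univ.filter (fun i : Fin n => (i : ℕ) < k), m i := by
  -- Chebyshev's sum inequality for `m` and the indicator of the first `k` indices.
  have hind : Antitone fun i : Fin n => if (i : ℕ) < k then (1 : α) else 0 := fun i j hij => by
    by_cases hj : (j : ℕ) < k
    · simp [hj, show (i : ℕ) < k from lt_of_le_of_lt hij hj]
    · simp only [hj, if_false]; split_ifs <;> norm_num
  have := (hm.monovary hind).sum_mul_sum_le_card_mul_sum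
  rw [sum_boole, card_filter_val_lt, min_eq_right hk, Fintype.card_fin] at this
  simpa only [mul_boole, ← sum_filter, mul_comm] using this

end Fin

theorem not_two_le_degree_of_cremonaReduced (r : ℕ) (hr : 2 ≤ r) (j : ℤ) (hj : j ≤ 0)
    (d : ℤ) (m : Fin (r + 3) → ℤ) (hm : Antitone m) (hpos : ∀ i, 0 ≤ m i)
    (hcrem : ∑ i ∈ univ.filter (fun i : Fin (r + 3) => (i : ℕ) < r + 1), m i ≤ d)
    (heq : ((r : ℤ) + 1) * d - ((r : ℤ) - 1) * ∑ i, m i = 2 + j * ((r : ℤ) - 1)) :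
    ¬ 2 ≤ d := by
  set F := ∑ i ∈ univ.filter (fun i : Fin (r + 3) => (i : ℕ) < r + 1), m i
  have hR : (2 : ℤ) ≤ r := by exact_mod_cast hr
  have hFS : ((r + 1 : ℕ) : ℤ) * ∑ i, m i ≤ ((r + 3 : ℕ) : ℤ) * F :=
    Fin.mul_sum_le_mul_sum_filter_val_lt hm (by omega)
  push_cast at hFS
  have h2d : 2 * d ≤ r + 1 := by
    nlinarith [mul_le_mul_of_nonneg_left hFS (by linarith : (0 : ℤ) ≤ r - 1),
      mul_le_mul_of_nonneg_left hcrem (by nlinarith : (0 : ℤ) ≤ (r - 1) * (r + 3)),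
      mul_nonpos_of_nonpos_of_nonneg hj (by nlinarith : (0 : ℤ) ≤ (r - 1) * (r + 1))]
  have htail : ∀ i : Fin (r + 3), r + 1 ≤ (i : ℕ) → m i = 0 := fun i hi => by
    have := Fin.card_nsmul_le_sum_filter_val_lt hm hi
    rw [nsmul_eq_mul] at this
    push_cast at this
    nlinarith [hpos i]
  have hSF : ∑ i, m i = F :=
    (sum_filter_of_ne fun i _ hi => by by_contra h; exact hi (htail i (by omega))).symm
  rw [hSF] at heq
  nlinarith [mul_le_mul_of_nonneg_left hcrem (by linarith : (0 : ℤ) ≤ r - 1),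
    mul_nonpos_of_nonpos_of_nonneg hj (by linarith : (0 : ℤ) ≤ r - 1)]

/-- Let r ≥ 2, s = r+3 and j ∈ {−1, 0}.  There is no curve class `c = (d, m)` with `d ≥ 2`,
multiplicities in decreasing order `m_1 ≥ ⋯ ≥ m_s ≥ 0`, Cremona reduced
(`d ≥ m_1 + ⋯ + m_{r+1}`) and satisfying `(r+1)d − (r−1)Σᵢ mᵢ = 2 + j(r−1)`.
Consequently, every Cremona reduced numerical (j)-class with nonnegative decreasing
multiplicities and positive degree has `d = 1` and `Σᵢ mᵢ = 1 − j`: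
it is the class of a line through 1 − j of the points. -/
theorem no_cremona_reduced_numerical_class_rplus3 (r : ℕ) (hr : 2 ≤ r)
    (j : ℤ) (hj : j = -1 ∨ j = 0) :
    (¬ ∃ (d : ℤ) (m : Fin (r + 3) → ℤ),
        2 ≤ d ∧ (∀ a b : Fin (r + 3), a ≤ b → m b ≤ m a) ∧ (∀ i, 0 ≤ m i) ∧
        (∑ i ∈ Finset.univ.filter (fun i : Fin (r + 3) => (i : ℕ) < r + 1), m i ≤ d) ∧
        ((r : ℤ) + 1) * d - ((r : ℤ) - 1) * ∑ i, m i = 2 + j * ((r : ℤ) - 1)) ∧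
    (∀ (d : ℤ) (m : Fin (r + 3) → ℤ),
        1 ≤ d → (∀ a b : Fin (r + 3), a ≤ b → m b ≤ m a) → (∀ i, 0 ≤ m i) →
        (2 ≤ d →
          ∑ i ∈ Finset.univ.filter (fun i : Fin (r + 3) => (i : ℕ) < r + 1), m i ≤ d) →
        ((r : ℤ) + 1) * d - ((r : ℤ) - 1) * ∑ i, m i = 2 + j * ((r : ℤ) - 1) →
        d = 1 ∧ ∑ i, m i = 1 - j) := by
  have hj : j ≤ 0 := by omega
  refine ⟨fun ⟨d, m, hd, hm, hpos, hcrem, heq⟩ =>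
    not_two_le_degree_of_cremonaReduced r hr j hj d m hm hpos hcrem heq hd, ?_⟩
  intro d m hd hm hpos hcrem heq
  obtain rfl : d = 1 := by
    by_contra hne
    have hd2 : 2 ≤ d := by omega
    exact not_two_le_degree_of_cremonaReduced r hr j hj d m hm hpos (hcrem hd2) heq hd2
  have hr1 : (r : ℤ) - 1 ≠ 0 := by omega
  exact ⟨rfl, mul_left_cancel₀ hr1 (by linarith)⟩
end

section
/- Let r ≥ 2 and s = r+3. Suppose c = (d, m) is a curve class with d > 0 and m_i ≥ 0 for all i, satisfying ⟨c, F⟩ = (r+1)d − (r−1)Σ_{i=1}^{r+3} m_i = 3 − r and ⟨c, c⟩ = d² − (r−1)Σ_{i=1}^{r+3} m_i² = 3 − 2r. Then either d = 1 and m takes the value 1 at exactly two indices and 0 at all others (the class of a line through two points), or d = r and m_i = 1 for all i (the class of the rational normal curve of degree r through all r+3 points). In particular, c is a (−1)-Weyl class. -/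
/-- `(−1)`-Weyl classes: the orbit of the class of a line through two points under the
Weyl group generated by multiplicity permutations and Cremona transformations. -/
inductive IsWeylMinusOneClass (r : ℕ) {s : ℕ} : ℤ × (Fin s → ℤ) → Prop
  | line (i j : Fin s) (hij : i ≠ j) :
      IsWeylMinusOneClass r (1, fun k => if k = i ∨ k = j then 1 else 0)
  | perm (σ : Equiv.Perm (Fin s)) {c : ℤ × (Fin s → ℤ)} :
      IsWeylMinusOneClass r c → IsWeylMinusOneClass r (c.1, c.2 ∘ σ)
  | cremona (I : Finset (Fin s)) (hI : I.card = r + 1) {c : ℤ × (Fin s → ℤ)} :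
      IsWeylMinusOneClass r c → IsWeylMinusOneClass r (cremonaCurve r I c)

set_option maxHeartbeats 1000000 in
/-- Let r ≥ 2 and s = r+3.  If `c = (d, m)` has `d > 0`, nonnegative multiplicities,
`⟨c, F⟩ = (r+1)d − (r−1)Σᵢ mᵢ = 3 − r` and `⟨c, c⟩ = d² − (r−1)Σᵢ mᵢ² = 3 − 2r`, then
either d = 1 and m takes the value 1 at exactly two indices and 0 at all others (a line
through two points), or d = r and all mᵢ = 1 (the rational normal curve of degree r
through all r+3 points).  In particular, c is a (−1)-Weyl class. -/
theorem minus_one_invariants_characterize_weyl_rplus3 (r : ℕ) (hr : 2 ≤ r)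
    (d : ℤ) (m : Fin (r + 3) → ℤ)
    (hd : 0 < d) (hm : ∀ i, 0 ≤ m i)
    (hF : ((r : ℤ) + 1) * d - ((r : ℤ) - 1) * ∑ i, m i = 3 - (r : ℤ))
    (hq : d ^ 2 - ((r : ℤ) - 1) * ∑ i, (m i) ^ 2 = 3 - 2 * (r : ℤ)) :
    ((d = 1 ∧ (Finset.univ.filter fun i => m i = 1).card = 2 ∧ ∀ i, m i = 0 ∨ m i = 1) ∨
      (d = (r : ℤ) ∧ ∀ i, m i = 1)) ∧
    IsWeylMinusOneClass r (d, m) := by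
  set R : ℤ := (r : ℤ) with hR
  have hR2 : (2 : ℤ) ≤ R := by rw [hR]; exact_mod_cast hr
  set S : ℤ := ∑ i, m i with hS
  set Q : ℤ := ∑ i, (m i) ^ 2 with hQ
  have hSQ : S ≤ Q := by
    apply Finset.sum_le_sum
    intro i _
    nlinarith [hm i]
  have hCS : S ^ 2 ≤ (R + 3) * Q := by
    have h := sq_sum_le_card_mul_sum_sq (s := (Finset.univ : Finset (Fin (r+3)))) (f := m)
    simp only [Finset.card_univ, Fintype.card_fin] at h
    have h3 : ((r + 3 : ℕ) : ℤ) = R + 3 := by rw [hR]; push_cast; ring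
    rw [← hS, ← hQ, h3] at h
    exact h
  have e1 : (R - 1) * S = (R + 1) * d + R - 3 := by linarith
  have e2 : (R - 1) * Q = d ^ 2 + 2 * R - 3 := by linarith
  have key : ((R + 1) * d + R - 3) ^ 2 ≤ (R + 3) * (R - 1) * (d ^ 2 + 2 * R - 3) := by
    calc ((R + 1) * d + R - 3) ^ 2 = ((R - 1) * S) ^ 2 := by rw [e1]
      _ = (R - 1) ^ 2 * S ^ 2 := by ring
      _ ≤ (R - 1) ^ 2 * ((R + 3) * Q) := mul_le_mul_of_nonneg_left hCS (sq_nonneg _)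
      _ = (R + 3) * (R - 1) * ((R - 1) * Q) := by ring
      _ = (R + 3) * (R - 1) * (d ^ 2 + 2 * R - 3) := by rw [e2]
  have hfac : (d - R) * (2 * d + R ^ 2 - 3) ≤ 0 := by nlinarith [key]
  have hdR : d ≤ R := by
    by_contra h
    push_neg at h
    nlinarith [hfac]
  have hmid : (R - 1) * (Q - S) = (d - 1) * (d - R) := by linear_combination e2 - e1
  have hd1R : d = 1 ∨ d = R := by
    rcases lt_or_ge d R with h | h
    · left
      by_contra h1
      have h2 : 2 ≤ d := by omega
      nlinarith [hSQ]
    · right; omega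
  -- in both cases Q = S, so every m i is 0 or 1
  have hQS : Q = S := by
    rcases hd1R with h | h <;> (rw [h] at hmid; nlinarith [hmid])
  have hall : ∀ i, m i = 0 ∨ m i = 1 := by
    have hsum0 : ∑ i, (m i ^ 2 - m i) = 0 := by
      rw [Finset.sum_sub_distrib, ← hQ, ← hS, hQS, sub_self]
    have hnn : ∀ i ∈ (Finset.univ : Finset (Fin (r+3))), (0:ℤ) ≤ m i ^ 2 - m i := by
      intro i _
      nlinarith [hm i]
    have h0 := (Finset.sum_eq_zero_iff_of_nonneg hnn).mp hsum0
    intro i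
    have h1 := h0 i (Finset.mem_univ i)
    have h2 : m i * (m i - 1) = 0 := by linear_combination h1
    rcases mul_eq_zero.mp h2 with h | h
    · exact Or.inl h
    · exact Or.inr (by linarith)
  rcases hd1R with hdv | hdv
  · -- d = 1 : line case
    have hS2 : S = 2 := by
      have : (R - 1) * S = (R - 1) * 2 := by rw [e1, hdv]; ring
      exact mul_left_cancel₀ (by omega : R - 1 ≠ 0) this
    have hcard : (Finset.univ.filter fun i => m i = 1).card = 2 := by
      have h1 : S = ∑ i, (if m i = 1 then (1:ℤ) else 0) := by
        rw [hS]
        refine Finset.sum_congr rfl fun i _ => ?_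
        rcases hall i with h | h <;> simp [h]
      have h2 : ∑ i, (if m i = 1 then (1:ℤ) else 0)
          = ((Finset.univ.filter fun i => m i = 1).card : ℤ) := by
        rw [Finset.sum_boole]
      have := h1.symm.trans hS2 ▸ h2
      omega
    obtain ⟨i, j, hij, hset⟩ := Finset.card_eq_two.mp hcard
    have hmval : m = fun k => if k = i ∨ k = j then (1:ℤ) else 0 := by
      funext k
      by_cases hk : k = i ∨ k = j
      · have : k ∈ Finset.univ.filter fun i => m i = 1 := by
          rw [hset]
          rcases hk with h | h <;> simp [h]
        simp only [Finset.mem_filter] at this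
        simp [hk, this.2]
      · have : k ∉ Finset.univ.filter fun i => m i = 1 := by
          rw [hset]
          simp only [Finset.mem_insert, Finset.mem_singleton]
          tauto
        simp only [Finset.mem_filter, Finset.mem_univ, true_and] at this
        have h0 : m k = 0 := by rcases hall k with h | h; exact h; exact absurd h this
        simp [hk, h0]
      
    refine ⟨Or.inl ⟨hdv, hcard, hall⟩, ?_⟩
    rw [hdv, hmval]
    exact IsWeylMinusOneClass.line i j hij
  · -- d = R : rational normal curve
    have hSR : S = R + 3 := by
      have : (R - 1) * S = (R - 1) * (R + 3) := by rw [e1, hdv]; ring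
      exact mul_left_cancel₀ (by omega : R - 1 ≠ 0) this
    have hall1 : ∀ i, m i = 1 := by
      by_contra h
      push_neg at h
      obtain ⟨j, hj⟩ := h
      have hjlt : m j < 1 := by rcases hall j with h | h; omega; exact absurd h hj
      have hlt : S < ∑ _i : Fin (r+3), (1:ℤ) := by
        rw [hS]
        refine Finset.sum_lt_sum (fun i _ => ?_) ⟨j, Finset.mem_univ j, hjlt⟩
        rcases hall i with h | h <;> omega
      rw [Finset.sum_const, Finset.card_univ, Fintype.card_fin, nsmul_eq_mul, mul_one] at hlt
      omega
    have h01 : (0 : Fin (r + 3)) ≠ 1 := by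
      simp [Fin.ext_iff]
    set I : Finset (Fin (r + 3)) := ({0, 1} : Finset (Fin (r + 3)))ᶜ with hI
    have hIcard : I.card = r + 1 := by
      rw [hI, Finset.card_compl, Finset.card_pair h01, Fintype.card_fin]
      omega
    have base := IsWeylMinusOneClass.cremona (r := r) I hIcard
      (IsWeylMinusOneClass.line (0 : Fin (r+3)) 1 h01)
    have ht : ∑ i ∈ I, (if i = (0 : Fin (r+3)) ∨ i = 1 then (1:ℤ) else 0) = 0 := by
      refine Finset.sum_eq_zero fun i hi => ?_
      rw [hI, Finset.mem_compl, Finset.mem_insert, Finset.mem_singleton] at hi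
      push_neg at hi
      simp [hi.1, hi.2]
    have heq : cremonaCurve r I
        (1, fun k => if k = (0 : Fin (r+3)) ∨ k = 1 then (1:ℤ) else 0) = (d, m) := by
      unfold cremonaCurve
      simp only [ht]
      refine Prod.ext ?_ ?_
      · simp only [hdv]
        push_cast
        ring
      · funext i
        simp only
        by_cases hi : i ∈ I
        · rw [hI, Finset.mem_compl, Finset.mem_insert, Finset.mem_singleton] at hi
          push_neg at hi
          simp [hi.1, hi.2, hall1 i, Finset.mem_compl, hI]
        · rw [hI, Finset.mem_compl, not_not, Finset.mem_insert, Finset.mem_singleton] at hi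
          have : i ∈ I ↔ False := by
            rw [hI]; simp [Finset.mem_compl, Finset.mem_insert, Finset.mem_singleton]; tauto
          simp [this, hi, hall1 i]
    refine ⟨Or.inr ⟨hdv, hall1⟩, ?_⟩
    rw [← heq]
    exact base
end

section
/- Let r be an integer with 2 ≤ r ≤ 5 and s = r+4. Suppose c = (d, m) is a curve class with d > 0 and m_i ≥ 0 for all i, satisfying ⟨c, F⟩ = (r+1)d − (r−1)Σ_{i=1}^{r+4} m_i = 3 − r and ⟨c, c⟩ = d² − (r−1)Σ_{i=1}^{r+4} m_i² = 3 − 2r. Then either d = 1 and m takes the value 1 at exactly two indices and 0 at all others, or d = r and m takes the value 1 at exactly r+3 indices and 0 at the remaining index. In particular, c is a (−1)-Weyl class. -/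
set_option maxHeartbeats 1000000


lemma core_aux (r d S Q : ℤ) (hr2 : 2 ≤ r) (hr5 : r ≤ 5) (hd : 1 ≤ d)
    (h1 : (r-1)*S = (r+1)*d + r - 3)
    (h2 : (r-1)*Q = d^2 + 2*r - 3)
    (hQS : S ≤ Q) (hC : S^2 ≤ (r+4)*Q) (hD : 0 ≤ Q - 3*S + 2*(r+4)) :
    d = 1 ∨ d = r := by
  interval_cases r
  · have hub : d ≤ 2 := by nlinarith [hC, sq_nonneg (d-3)]
    interval_cases d <;> omega
  · have hub : d ≤ 4 := by nlinarith [hC, sq_nonneg (d-5)]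
    interval_cases d <;> omega
  · have hub : d ≤ 7 := by nlinarith [hC, sq_nonneg (d-8)]
    interval_cases d <;> omega
  · have hub : d ≤ 10 := by nlinarith [hC, sq_nonneg (d-11)]
    interval_cases d <;> omega

lemma self_le_sq_of_nonneg (x : ℤ) (hx : 0 ≤ x) : x ≤ x^2 := by
  rcases (by omega : x = 0 ∨ 1 ≤ x) with h | h <;> nlinarith

lemma int_quad_nonneg (x : ℤ) : 0 ≤ x^2 - 3*x + 2 := by
  rcases (by omega : x ≤ 1 ∨ 2 ≤ x) with h | h <;> nlinarith

/-- Let 2 ≤ r ≤ 5 and s = r+4.  If `c = (d, m)` has `d > 0`, nonnegative multiplicities,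
`⟨c, F⟩ = (r+1)d − (r−1)Σᵢ mᵢ = 3 − r` and `⟨c, c⟩ = d² − (r−1)Σᵢ mᵢ² = 3 − 2r`, then
either d = 1 and m takes the value 1 at exactly two indices and 0 at all others, or
d = r and m takes the value 1 at exactly r+3 indices and 0 at the remaining index.
In particular, c is a (−1)-Weyl class. -/
theorem minus_one_invariants_characterize_weyl_rplus4 (r : ℕ) (hr2 : 2 ≤ r) (hr5 : r ≤ 5)
    (d : ℤ) (m : Fin (r + 4) → ℤ)
    (hd : 0 < d) (hm : ∀ i, 0 ≤ m i)
    (hF : ((r : ℤ) + 1) * d - ((r : ℤ) - 1) * ∑ i, m i = 3 - (r : ℤ))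
    (hq : d ^ 2 - ((r : ℤ) - 1) * ∑ i, (m i) ^ 2 = 3 - 2 * (r : ℤ)) :
    ((d = 1 ∧ (Finset.univ.filter fun i => m i = 1).card = 2 ∧ ∀ i, m i = 0 ∨ m i = 1) ∨
      (d = (r : ℤ) ∧ (Finset.univ.filter fun i => m i = 1).card = r + 3 ∧
        ∀ i, m i = 0 ∨ m i = 1)) ∧
    IsWeylMinusOneClass r (d, m) := by
  set S := ∑ i, m i with hSdef
  set Q := ∑ i, (m i)^2 with hQdef
  have hrr : (2:ℤ) ≤ (r:ℤ) := by exact_mod_cast hr2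
  have hrr5 : ((r:ℤ)) ≤ 5 := by exact_mod_cast hr5
  have h1 : ((r:ℤ)-1)*S = ((r:ℤ)+1)*d + (r:ℤ) - 3 := by linarith
  have h2 : ((r:ℤ)-1)*Q = d^2 + 2*(r:ℤ) - 3 := by linarith
  have hQS : S ≤ Q := Finset.sum_le_sum fun i _ => self_le_sq_of_nonneg _ (hm i)
  have hC : S^2 ≤ ((r:ℤ)+4)*Q := by
    have h := sq_sum_le_card_mul_sum_sq (s := (Finset.univ : Finset (Fin (r+4)))) (f := m)
    rw [Finset.card_univ, Fintype.card_fin] at h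
    calc S^2 ≤ ((r+4 : ℕ) : ℤ) * Q := by exact_mod_cast h
      _ = ((r:ℤ)+4)*Q := by push_cast; ring
  have hD : 0 ≤ Q - 3*S + 2*((r:ℤ)+4) := by
    have h := Finset.sum_nonneg (s := (Finset.univ : Finset (Fin (r+4))))
      (f := fun i => (m i)^2 - 3*(m i) + 2) (fun i _ => int_quad_nonneg (m i))
    have hsum : ∑ i : Fin (r+4), ((m i)^2 - 3*(m i) + 2) = Q - 3*S + 2*((r:ℤ)+4) := by
      rw [Finset.sum_add_distrib, Finset.sum_sub_distrib, ← Finset.mul_sum,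
        Finset.sum_const, Finset.card_univ, Fintype.card_fin]
      push_cast; ring
    linarith [hsum ▸ h]
  have hd1r : d = 1 ∨ d = (r:ℤ) :=
    core_aux (r:ℤ) d S Q hrr hrr5 hd h1 h2 hQS hC hD
  -- Q = S in both cases
  have h3 : ((r:ℤ)-1)*(Q-S) = (d-1)*(d-(r:ℤ)) := by linear_combination h2 - h1
  have hQeqS : Q = S := by
    rcases hd1r with h | h <;> rw [h] at h3 <;> nlinarith [h3]
  -- each m i is 0 or 1
  have hbin : ∀ i, m i = 0 ∨ m i = 1 := by
    have hzero : ∑ i : Fin (r+4), ((m i)^2 - m i) = 0 := by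
      rw [Finset.sum_sub_distrib, ← hQdef, ← hSdef, hQeqS, sub_self]
    have hterm := (Finset.sum_eq_zero_iff_of_nonneg
      (fun i _ => by linarith [self_le_sq_of_nonneg (m i) (hm i)])).1 hzero
    intro i
    have h := hterm i (Finset.mem_univ i)
    have : m i * (m i - 1) = 0 := by linear_combination h
    rcases mul_eq_zero.1 this with h' | h' <;> omega
  -- the card of ones equals S
  have hScard : ((Finset.univ.filter fun i => m i = 1).card : ℤ) = S := by
    rw [hSdef, ← Finset.sum_filter_add_sum_filter_not Finset.univ (fun i => m i = 1) m]
    have e1 : ∑ i ∈ Finset.univ.filter (fun i => m i = 1), m i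
        = ((Finset.univ.filter fun i => m i = 1).card : ℤ) := by
      rw [Finset.sum_congr rfl (fun i hi => (Finset.mem_filter.1 hi).2), Finset.sum_const,
        nsmul_eq_mul, mul_one]
    have e2 : ∑ i ∈ Finset.univ.filter (fun i => ¬ m i = 1), m i = 0 :=
      Finset.sum_eq_zero fun i hi => by
        have := (Finset.mem_filter.1 hi).2; rcases hbin i with h | h <;> simp_all
    rw [e1, e2, add_zero]
  rcases hd1r with hd1 | hdr
  · -- d = 1
    have hS2 : S = 2 := by
      rw [hd1] at h1; have : ((r:ℤ)-1)*S = ((r:ℤ)-1)*2 := by linarith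
      exact mul_left_cancel₀ (by omega) this
    have hcard2 : (Finset.univ.filter fun i => m i = 1).card = 2 := by
      rw [hS2] at hScard; exact_mod_cast hScard
    obtain ⟨i, j, hij, hT⟩ := Finset.card_eq_two.1 hcard2
    have hmval : m = fun k => if k = i ∨ k = j then 1 else 0 := by
      funext k
      have hk : m k = 1 ↔ k = i ∨ k = j := by
        constructor
        · intro h
          have : k ∈ Finset.univ.filter fun i => m i = 1 := by
            simp [Finset.mem_filter, h]
          rw [hT] at this; simpa using this
        · intro h
          have : k ∈ ({i, j} : Finset (Fin (r+4))) := by simpa using h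
          rw [← hT] at this; exact (Finset.mem_filter.1 this).2
      by_cases h : k = i ∨ k = j
      · simp [h, hk.2 h]
      · rcases hbin k with h0 | h0
        · simp [h, h0]
        · exact absurd (hk.1 h0) h
    subst hd1
    refine ⟨Or.inl ⟨rfl, hcard2, hbin⟩, ?_⟩
    rw [hmval]
    exact IsWeylMinusOneClass.line i j hij
  · -- d = r
    have hSr : S = (r:ℤ) + 3 := by
      rw [hdr] at h1
      have : ((r:ℤ)-1)*S = ((r:ℤ)-1)*((r:ℤ)+3) := by linarith [h1]; 
      exact mul_left_cancel₀ (by omega) this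
    have hcardr : (Finset.univ.filter fun i => m i = 1).card = r + 3 := by
      rw [hSr] at hScard; exact_mod_cast hScard
    -- find the unique zero index k
    have hcardTc : (Finset.univ.filter fun i => ¬ m i = 1).card = 1 := by
      have := Finset.card_filter_add_card_filter_not
        (s := (Finset.univ : Finset (Fin (r+4)))) (p := fun i => m i = 1)
      rw [Finset.card_univ, Fintype.card_fin, hcardr] at this
      omega
    obtain ⟨k, hk⟩ := Finset.card_eq_one.1 hcardTc
    have hmk : m k = 0 := by
      have : k ∈ Finset.univ.filter fun i => ¬ m i = 1 := hk ▸ Finset.mem_singleton_self k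
      have h := (Finset.mem_filter.1 this).2
      rcases hbin k with h0 | h0 <;> simp_all
    have hmone : ∀ x : Fin (r+4), x ≠ k → m x = 1 := by
      intro x hx
      by_contra h
      have : x ∈ Finset.univ.filter fun i => ¬ m i = 1 := by
        simp [Finset.mem_filter, h]
      rw [hk] at this
      exact hx (Finset.mem_singleton.1 this)
    -- pick two distinct one-indices i j
    obtain ⟨i, hiT, j, hjT, hij⟩ := Finset.one_lt_card.1
      (by rw [hcardr]; omega : 1 < (Finset.univ.filter fun i => m i = 1).card)
    have hmi : m i = 1 := (Finset.mem_filter.1 hiT).2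
    have hmj : m j = 1 := (Finset.mem_filter.1 hjT).2
    have hik : i ≠ k := fun h => by rw [h, hmk] at hmi; omega
    have hjk : j ≠ k := fun h => by rw [h, hmk] at hmj; omega
    have hmemI : ∀ x : Fin (r+4),
        x ∈ Finset.univ \ ({i,j,k} : Finset (Fin (r+4))) ↔ ¬(x = i ∨ x = j ∨ x = k) := by
      intro x
      simp [Finset.mem_sdiff]
    have hI3 : ({i, j, k} : Finset (Fin (r+4))).card = 3 := by
      rw [Finset.card_insert_of_notMem (by simp [hij, hik]),
        Finset.card_insert_of_notMem (by simp [hjk]), Finset.card_singleton]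
    have hIcard : (Finset.univ \ ({i,j,k} : Finset (Fin (r+4)))).card = r + 1 := by
      rw [Finset.card_sdiff_of_subset (Finset.subset_univ _), Finset.card_univ, Fintype.card_fin, hI3]
      omega
    have hline := IsWeylMinusOneClass.line (r := r) i j hij
    have hcrem := IsWeylMinusOneClass.cremona _ hIcard hline
    have hsumI : ∑ x ∈ Finset.univ \ ({i,j,k} : Finset (Fin (r+4))),
        (if x = i ∨ x = j then (1:ℤ) else 0) = 0 :=
      Finset.sum_eq_zero fun x hx => by
        have := (hmemI x).1 hx
        rw [if_neg (by tauto : ¬(x = i ∨ x = j))]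
    have heq : cremonaCurve r (Finset.univ \ ({i,j,k} : Finset (Fin (r+4))))
        (1, fun k => if k = i ∨ k = j then (1:ℤ) else 0) = ((r:ℤ), m) := by
      rw [cremonaCurve]
      simp only [hsumI, sub_zero]
      refine Prod.ext ?_ ?_
      · show (1:ℤ) + ((r:ℤ) - 1) * 1 = (r:ℤ); ring
      · show (fun x => if x ∈ _ then _ else _) = m
        funext x
        by_cases hxI : x ∈ Finset.univ \ ({i,j,k} : Finset (Fin (r+4)))
        · have hx3 := (hmemI x).1 hxI
          rw [if_pos hxI, if_neg (by tauto : ¬(x = i ∨ x = j))]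
          rw [hmone x (by tauto)]
          norm_num
        · have hx3 : x = i ∨ x = j ∨ x = k := by
            by_contra h; exact hxI ((hmemI x).2 h)
          rw [if_neg hxI]
          rcases hx3 with h | h | h
          · rw [if_pos (Or.inl h), h, hmi]
          · rw [if_pos (Or.inr h), h, hmj]
          · have hne : ¬(x = i ∨ x = j) := by
              rintro (rfl | rfl)
              · exact hik h
              · exact hjk h
            rw [if_neg hne, h, hmk]
    rw [hdr]
    refine ⟨Or.inr ⟨rfl, hcardr, hbin⟩, ?_⟩
    rw [← heq]
    exact hcrem
end

section
/- For r = 6 and s = 10, the curve class c = 3F = (21, (3,3,3,3,3,3,3,3,3,3)) satisfies ⟨c, F⟩ = 3 − r = −3 and ⟨c, c⟩ = 3 − 2r = −9, and is Cremona reduced (21 ≥ 3·7), yet c is neither the class of a line through two points nor the class of a rational normal curve of degree r through r+3 points; thus for r ≥ 6 the two invariants ⟨c, F⟩ = 3−r and ⟨c, c⟩ = 3−2r do not characterize (−1)-Weyl classes among classes with positive degree and nonnegative multiplicities. -/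
lemma cremona_invol {r s : ℕ} (I : Finset (Fin s)) (hI : I.card = r + 1)
    (c : ℤ × (Fin s → ℤ)) : cremonaCurve r I (cremonaCurve r I c) = c := by
  unfold cremonaCurve
  have hsum : ∑ i ∈ I, (if i ∈ I then c.2 i + (c.1 - ∑ j ∈ I, c.2 j) else c.2 i)
      = (∑ i ∈ I, c.2 i) + (I.card : ℤ) * (c.1 - ∑ j ∈ I, c.2 j) := by
    rw [Finset.sum_congr rfl (fun i hi => if_pos hi), Finset.sum_add_distrib,
      Finset.sum_const, nsmul_eq_mul]
  simp only [hsum, hI]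
  push_cast
  refine Prod.ext ?_ (funext fun i => ?_)
  · show c.1 + _ + _ = c.1
    ring
  · show (if i ∈ I then _ else _) = c.2 i
    by_cases hi : i ∈ I <;> simp only [hi, if_pos, if_neg, not_false_iff, ite_true, ite_false] <;> ring

lemma threeF_fixed {I : Finset (Fin 10)} (hI : I.card = 7) :
    cremonaCurve 6 I ((21 : ℤ), fun _ : Fin 10 => (3 : ℤ)) =
      ((21 : ℤ), fun _ : Fin 10 => (3 : ℤ)) := by
  unfold cremonaCurve
  have : (∑ _i ∈ I, (3 : ℤ)) = 21 := by
    rw [Finset.sum_const, hI]; norm_num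
  simp [this]

lemma weyl_ne_threeF {c : ℤ × (Fin 10 → ℤ)} (h : IsWeylMinusOneClass 6 c) :
    c ≠ ((21 : ℤ), fun _ : Fin 10 => (3 : ℤ)) := by
  induction h with
  | line i j hij =>
    intro hc
    have := congrArg Prod.fst hc
    norm_num at this
  | @perm σ c h ih =>
    intro hc
    apply ih
    have h1 : c.1 = 21 := congrArg Prod.fst hc
    have h2 : c.2 ∘ σ = fun _ => (3 : ℤ) := congrArg Prod.snd hc
    refine Prod.ext h1 (funext fun i => ?_)
    have := congrFun h2 (σ.symm i)
    simpa using this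
  | cremona I hI h ih =>
    intro hc
    apply ih
    have := congrArg (cremonaCurve 6 I) hc
    rwa [cremona_invol I hI, threeF_fixed hI] at this

/-- For r = 6 and s = 10, the curve class `c = 3F = (21, (3,…,3))` satisfies
`⟨c, F⟩ = 3 − r = −3` and `⟨c, c⟩ = 3 − 2r = −9`, is Cremona reduced (21 ≥ 3·7), yet it
is neither the class of a line through two points nor the class of a rational normal
curve of degree r through r+3 points, and it is not a (−1)-Weyl class: for r ≥ 6 the
two invariants do not characterize (−1)-Weyl classes among classes with positive degree
and nonnegative multiplicities. -/
theorem three_F_counterexample_r6 :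
    ((6 : ℤ) + 1) * 21 - ((6 : ℤ) - 1) * (∑ _i : Fin 10, (3 : ℤ)) = 3 - 6 ∧
    (21 : ℤ) ^ 2 - ((6 : ℤ) - 1) * (∑ _i : Fin 10, (3 : ℤ) ^ 2) = 3 - 2 * 6 ∧
    (∑ _i ∈ Finset.univ.filter (fun i : Fin 10 => (i : ℕ) < 7), (3 : ℤ)) ≤ 21 ∧
    (¬ ∃ i j : Fin 10, i ≠ j ∧
        ((21 : ℤ), fun _ : Fin 10 => (3 : ℤ))
          = ((1 : ℤ), fun k => if k = i ∨ k = j then 1 else 0)) ∧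
    (¬ ∃ i₀ : Fin 10,
        ((21 : ℤ), fun _ : Fin 10 => (3 : ℤ))
          = ((6 : ℤ), fun k => if k = i₀ then 0 else 1)) ∧
    ¬ IsWeylMinusOneClass 6 ((21 : ℤ), fun _ : Fin 10 => (3 : ℤ)) := by
  refine ⟨by simp, by simp, ?_, ?_, ?_, ?_⟩
  · have hcard : (Finset.univ.filter (fun i : Fin 10 => (i : ℕ) < 7)).card = 7 := by decide
    rw [Finset.sum_const, hcard]
    norm_num
  · rintro ⟨i, j, hij, hc⟩
    have := congrArg Prod.fst hc
    norm_num at this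
  · rintro ⟨i₀, hc⟩
    have := congrArg Prod.fst hc
    norm_num at this
  · intro h
    exact weyl_ne_threeF h rfl
end

section
/- Let r ≥ 3 and s = r+5. Let c = (d, m) be a curve class with d > 0 and multiplicities in increasing order 0 ≤ m_1 ≤ m_2 ≤ ⋯ ≤ m_{r+5}, satisfying d > m_3 + m_4 + Σ_{i=7}^{r+5} m_i. Set t = d − Σ_{i=1}^{r+1} m_i and d′ = d + (r−1)t (the degree of the Cremona image based at the r+1 lowest-multiplicity points). Then: (i) t > 0, hence d′ > d; (ii) m_{r+5} ≤ m_1 + t, so the multiplicities of the Cremona image, arranged in increasing order, are m′ = (m_{r+2}, m_{r+3}, m_{r+4}, m_{r+5}, m_1 + t, m_2 + t, …, m_{r+1} + t); and (iii) d′ > m′_3 + m′_4 + Σ_{i=7}^{r+5} m′_i, i.e., d′ > m_{r+4} + m_{r+5} + Σ_{i=3}^{r+1} (m_i + t), so the Cremona image again satisfies the same hypothesis. -/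
lemma fin_filter_ge_sum_eq {N a : ℕ} (g : Fin N → ℤ) (G : ℕ → ℤ)
    (hg : ∀ (n : ℕ) (h : n < N), a ≤ n → g ⟨n, h⟩ = G n) :
    ∑ i ∈ Finset.univ.filter (fun i : Fin N => a ≤ (i : ℕ)), g i
      = ∑ n ∈ Finset.Ico a N, G n := by
  rw [Finset.sum_filter]
  rw [show (Finset.Ico a N) = (Finset.range N).filter (fun n => a ≤ n) by
    ext x; simp [Finset.mem_Ico]; omega]
  rw [Finset.sum_filter]
  rw [← Fin.sum_univ_eq_sum_range (fun n => if a ≤ n then G n else 0)]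
  refine Finset.sum_congr rfl fun i _ => ?_
  by_cases h : a ≤ (i : ℕ)
  · simp only [h, if_true]
    rw [← hg i.val i.isLt h]
  · simp [h]

lemma fin_filter_lt_sum_eq {N b : ℕ} (g : Fin N → ℤ) (G : ℕ → ℤ) (hb : b ≤ N)
    (hg : ∀ (n : ℕ) (h : n < N), n < b → g ⟨n, h⟩ = G n) :
    ∑ i ∈ Finset.univ.filter (fun i : Fin N => (i : ℕ) < b), g i
      = ∑ n ∈ Finset.Ico 0 b, G n := by
  rw [Finset.sum_filter]
  rw [show (Finset.Ico 0 b) = (Finset.range N).filter (fun n => n < b) by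
    ext x; simp [Finset.mem_Ico]; omega]
  rw [Finset.sum_filter]
  rw [← Fin.sum_univ_eq_sum_range (fun n => if n < b then G n else 0)]
  refine Finset.sum_congr rfl fun i _ => ?_
  by_cases h : (i : ℕ) < b
  · simp only [h, if_true]
    rw [← hg i.val i.isLt h]
  · simp [h]

set_option maxHeartbeats 1000000 in
/-- Let r ≥ 3 and s = r+5.  Let `c = (d, m)` be a curve class with d > 0 and
multiplicities in increasing order `0 ≤ m_1 ≤ ⋯ ≤ m_{r+5}` satisfying
`d > m_3 + m_4 + Σ_{i=7}^{r+5} m_i`.  With `t = d − Σ_{i=1}^{r+1} m_i` and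
`d′ = d + (r−1)t` (the degree of the Cremona image based at the r+1 smallest
multiplicities): (i) t > 0, hence d′ > d; (ii) `m_{r+5} ≤ m_1 + t`, so the
multiplicities of the Cremona image arranged in increasing order are
`m′ = (m_{r+2}, m_{r+3}, m_{r+4}, m_{r+5}, m_1+t, …, m_{r+1}+t)` (in particular m′ is
increasing); and (iii) `d′ > m′_3 + m′_4 + Σ_{i=7}^{r+5} m′_i`, so the Cremona image
again satisfies the same hypothesis. -/
theorem cremona_recursion_rplus5 (r : ℕ) (hr : 3 ≤ r)
    (d : ℤ) (m : Fin (r + 5) → ℤ)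
    (hd : 0 < d) (hm : ∀ i, 0 ≤ m i)
    (hmono : ∀ a b : Fin (r + 5), a ≤ b → m a ≤ m b)
    (hineq : m ⟨2, by omega⟩ + m ⟨3, by omega⟩ +
        ∑ i ∈ Finset.univ.filter (fun i : Fin (r + 5) => 6 ≤ (i : ℕ)), m i < d)
    (t : ℤ)
    (ht : t = d - ∑ i ∈ Finset.univ.filter (fun i : Fin (r + 5) => (i : ℕ) < r + 1), m i)
    (d' : ℤ) (hd' : d' = d + ((r : ℤ) - 1) * t)
    (m' : Fin (r + 5) → ℤ)
    (hm' : ∀ i : Fin (r + 5), m' i =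
        if h : (i : ℕ) < 4 then m ⟨r + 1 + (i : ℕ), by omega⟩
        else m ⟨(i : ℕ) - 4, by exact Nat.lt_of_le_of_lt (Nat.sub_le _ _) i.isLt⟩ + t) :
    0 < t ∧ d < d' ∧
    m ⟨r + 4, by omega⟩ ≤ m ⟨0, by omega⟩ + t ∧
    (∀ a b : Fin (r + 5), a ≤ b → m' a ≤ m' b) ∧
    m' ⟨2, by omega⟩ + m' ⟨3, by omega⟩ +
        ∑ i ∈ Finset.univ.filter (fun i : Fin (r + 5) => 6 ≤ (i : ℕ)), m' i < d' := by
  classical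
  obtain ⟨F, hFval⟩ : ∃ F : ℕ → ℤ, ∀ (n : ℕ) (h : n < r + 5), F n = m ⟨n, h⟩ :=
    ⟨fun n => if h : n < r + 5 then m ⟨n, h⟩ else 0, fun n h => dif_pos h⟩
  have hFmono : ∀ x y : ℕ, x ≤ y → y < r + 5 → F x ≤ F y := by
    intro x y hxy hy
    rw [hFval x (lt_of_le_of_lt hxy hy), hFval y hy]
    exact hmono _ _ (Fin.mk_le_mk.mpr hxy)
  -- shift lemma
  have shift : ∀ a b k : ℕ, b + k ≤ r + 5 →
      ∑ n ∈ Finset.Ico a b, F n ≤ ∑ n ∈ Finset.Ico (a + k) (b + k), F n := by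
    intro a b k hbk
    rw [← Finset.sum_Ico_add']
    refine Finset.sum_le_sum fun n hn => ?_
    have hn' := Finset.mem_Ico.mp hn
    exact hFmono n (n + k) (Nat.le_add_right _ _) (by omega)
  -- sum conversions
  have hA : ∑ i ∈ Finset.univ.filter (fun i : Fin (r + 5) => 6 ≤ (i : ℕ)), m i
      = ∑ n ∈ Finset.Ico 6 (r + 5), F n :=
    fin_filter_ge_sum_eq m F (fun n h _ => (hFval n h).symm)
  have hLow : ∑ i ∈ Finset.univ.filter (fun i : Fin (r + 5) => (i : ℕ) < r + 1), m i
      = ∑ n ∈ Finset.Ico 0 (r + 1), F n :=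
    fin_filter_lt_sum_eq m F (by omega) (fun n h _ => (hFval n h).symm)
  rw [hA] at hineq
  rw [hLow] at ht
  -- abbreviations
  have h23 : m ⟨2, by omega⟩ = F 2 ∧ m ⟨3, by omega⟩ = F 3 :=
    ⟨(hFval 2 (by omega)).symm, (hFval 3 (by omega)).symm⟩
  rw [h23.1, h23.2] at hineq
  -- (i) 0 < t
  have hsplit01 : ∑ n ∈ Finset.Ico 0 (r + 1), F n
      = F 0 + (F 1 + ∑ n ∈ Finset.Ico 2 (r + 1), F n) := by
    rw [Finset.sum_eq_sum_Ico_succ_bot (by omega) F,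
        Finset.sum_eq_sum_Ico_succ_bot (by omega : 1 < r + 1) F]
  have hquart : ∑ n ∈ Finset.Ico 2 (r + 1), F n ≤ ∑ n ∈ Finset.Ico 6 (r + 5), F n := by
    have := shift 2 (r + 1) 4 (by omega)
    simpa using this
  have ht_pos : 0 < t := by
    have h02 : F 0 ≤ F 2 := hFmono 0 2 (by omega) (by omega)
    have h13 : F 1 ≤ F 3 := hFmono 1 3 (by omega) (by omega)
    rw [ht, hsplit01]
    linarith
  refine ⟨ht_pos, by rw [hd']; nlinarith [ht_pos, (by exact_mod_cast hr : (3:ℤ) ≤ (r:ℤ))], ?_⟩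
  -- (ii) m_{r+4} ≤ m_0 + t
  have key2 : F (r + 4) ≤ F 0 + t := by
    have hsplit : ∑ n ∈ Finset.Ico 0 (r + 1), F n
        = F 0 + (F 1 + (F 2 + ∑ n ∈ Finset.Ico 3 (r + 1), F n)) := by
      rw [Finset.sum_eq_sum_Ico_succ_bot (by omega) F,
          Finset.sum_eq_sum_Ico_succ_bot (by omega : 1 < r + 1) F,
          Finset.sum_eq_sum_Ico_succ_bot (by omega : 2 < r + 1) F]
    have hsh : ∑ n ∈ Finset.Ico 3 (r + 1), F n ≤ ∑ n ∈ Finset.Ico 6 (r + 4), F n := by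
      have := shift 3 (r + 1) 3 (by omega)
      simpa using this
    have htop : ∑ n ∈ Finset.Ico 6 (r + 5), F n
        = (∑ n ∈ Finset.Ico 6 (r + 4), F n) + F (r + 4) := by
      have := Finset.sum_Ico_succ_top (by omega : 6 ≤ r + 4) F
      simpa [show r + 4 + 1 = r + 5 by omega] using this
    have h12 : F 1 ≤ F 2 := hFmono 1 2 (by omega) (by omega)
    have h23' : F 2 ≤ F 3 := hFmono 2 3 (by omega) (by omega)
    rw [ht, hsplit]
    rw [htop] at hineq
    linarith
  have hmr4 : m ⟨r + 4, Nat.lt_succ_self _⟩ = F (r + 4) := (hFval _ _).symm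
  have hm0 : m ⟨0, Nat.succ_pos _⟩ = F 0 := (hFval _ _).symm
  have keym : m ⟨r + 4, Nat.lt_succ_self _⟩ ≤ m ⟨0, Nat.succ_pos _⟩ + t := by
    rw [hmr4, hm0]; exact key2
  refine ⟨keym, ?_, ?_⟩
  -- monotonicity of m'
  · intro a b hab
    have hab' : (a : ℕ) ≤ (b : ℕ) := hab
    rw [hm' a, hm' b]
    by_cases ha : (a : ℕ) < 4
    · by_cases hb : (b : ℕ) < 4
      · rw [dif_pos ha, dif_pos hb]
        exact hmono _ _ (Fin.mk_le_mk.mpr (by omega))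
      · rw [dif_pos ha, dif_neg hb]
        have h1 : m ⟨r + 1 + (a : ℕ), by omega⟩ ≤ m ⟨r + 4, by omega⟩ :=
          hmono _ _ (Fin.mk_le_mk.mpr (by omega))
        have h2 : m ⟨0, by omega⟩ ≤ m ⟨(b : ℕ) - 4, by
            exact Nat.lt_of_le_of_lt (Nat.sub_le _ _) b.isLt⟩ :=
          hmono _ _ (Fin.mk_le_mk.mpr (by omega))
        have h3 : m ⟨r + 4, by omega⟩ ≤ m ⟨0, by omega⟩ + t := keym
        linarith
    · have hb : ¬ (b : ℕ) < 4 := by omega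
      rw [dif_neg ha, dif_neg hb]
      have := hmono ⟨(a : ℕ) - 4, by exact Nat.lt_of_le_of_lt (Nat.sub_le _ _) a.isLt⟩
        ⟨(b : ℕ) - 4, by exact Nat.lt_of_le_of_lt (Nat.sub_le _ _) b.isLt⟩
        (Fin.mk_le_mk.mpr (by omega))
      linarith
  -- (iii)
  · have p2 : (2 : ℕ) < r + 5 := Nat.lt_of_lt_of_le (by norm_num) (Nat.le_add_left 5 r)
    have p3 : (3 : ℕ) < r + 5 := Nat.lt_of_lt_of_le (by norm_num) (Nat.le_add_left 5 r)
    have hm'2 : m' ⟨2, p2⟩ = F (r + 3) := by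
      rw [hm' _, dif_pos (show (2:ℕ) < 4 by norm_num)]
      rw [hFval (r + 3) (Nat.add_lt_add_left (by norm_num) r)]
      congr 1
    have hm'3 : m' ⟨3, p3⟩ = F (r + 4) := by
      rw [hm' _, dif_pos (show (3:ℕ) < 4 by norm_num)]
      rw [hFval (r + 4) (Nat.lt_succ_self _)]
      congr 1
    have hA' : ∑ i ∈ Finset.univ.filter (fun i : Fin (r + 5) => 6 ≤ (i : ℕ)), m' i
        = ∑ n ∈ Finset.Ico 6 (r + 5), (F (n - 4) + t) := by
      refine fin_filter_ge_sum_eq m' (fun n => F (n - 4) + t) (fun n h hn => ?_)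
      rw [hm' _, dif_neg (show ¬ n < 4 from fun hc => absurd hn (by omega))]
      congr 1
      exact (hFval (n - 4) _).symm
    have hresum : ∑ n ∈ Finset.Ico 6 (r + 5), (F (n - 4) + t)
        = (∑ n ∈ Finset.Ico 2 (r + 1), F n) + ((r : ℤ) - 1) * t := by
      rw [Finset.sum_add_distrib, Finset.sum_const, Nat.card_Ico]
      have h1 : ∑ n ∈ Finset.Ico 6 (r + 5), F (n - 4)
          = ∑ n ∈ Finset.Ico 2 (r + 1), F n := by
        have h0 := Finset.sum_Ico_add' (fun n => F (n - 4)) 2 (r + 1) 4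
        simp only [Nat.add_sub_cancel] at h0
        rw [show r + 5 = r + 1 + 4 from by omega, show (6:ℕ) = 2 + 4 from rfl]
        exact h0.symm
      rw [h1]
      congr 1
      have : ((r + 5 - 6 : ℕ) : ℤ) = (r : ℤ) - 1 := by
        have : r + 5 - 6 = r - 1 := by omega
        rw [this]; push_cast [Nat.cast_sub (by omega : 1 ≤ r)]; ring
      rw [nsmul_eq_mul, this]
    rw [hm'2, hm'3, hA', hresum, hd']
    -- need: F(r+3) + F(r+4) + Σ_{Ico 2 (r+1)} F < d
    have hsplit2 : ∑ n ∈ Finset.Ico 2 (r + 1), F n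
        = F 2 + (F 3 + ∑ n ∈ Finset.Ico 4 (r + 1), F n) := by
      rw [Finset.sum_eq_sum_Ico_succ_bot (by omega : 2 < r + 1) F,
          Finset.sum_eq_sum_Ico_succ_bot (by omega : 3 < r + 1) F]
    have hsh2 : ∑ n ∈ Finset.Ico 4 (r + 1), F n ≤ ∑ n ∈ Finset.Ico 6 (r + 3), F n := by
      have := shift 4 (r + 1) 2 (by omega)
      simpa using this
    have htop2 : ∑ n ∈ Finset.Ico 6 (r + 5), F n
        = (∑ n ∈ Finset.Ico 6 (r + 3), F n) + F (r + 3) + F (r + 4) := by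
      have h1 := Finset.sum_Ico_succ_top (by omega : 6 ≤ r + 4) F
      have h2 := Finset.sum_Ico_succ_top (by omega : 6 ≤ r + 3) F
      rw [show r + 5 = r + 4 + 1 by omega, h1, show r + 4 = r + 3 + 1 by omega, h2]
    rw [htop2] at hineq
    linarith
end

section
/- Let r ≥ 2 and s be integers, and let W be the group of ℤ-linear automorphisms of the curve-class lattice ℤ × ℤ^s generated by all multiplicity permutations (d, m) ↦ (d, m∘σ) for permutations σ of {1,…,s} and all Cremona transformations φ_I for (r+1)-element subsets I ⊆ {1,…,s}. Then: (a) if r ≥ 5 and s ≥ r+4, or r ∈ {3,4} and s ≥ r+5, or r = 2 and s ≥ 9, the W-orbit of the general line class h = (1, (0,…,0)) is infinite and the W-orbit of the class h − e_1 = (1, (1,0,…,0)) of a line through one point is infinite; (b) if r ≥ 3 and s ≥ r+5, the W-orbit of the class h − e_1 − e_2 = (1, (1,1,0,…,0)) of a line through two points is infinite. -/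
/-- The orbit of a curve class `c₀` under the Weyl group W generated by all multiplicity
permutations `(d, m) ↦ (d, m ∘ σ)` and all Cremona transformations `φ_I` for
(r+1)-element subsets I (all of which are invertible, so reachability gives exactly
the W-orbit). -/
inductive WeylOrbit (r : ℕ) {s : ℕ} (c₀ : ℤ × (Fin s → ℤ)) : ℤ × (Fin s → ℤ) → Prop
  | base : WeylOrbit r c₀ c₀
  | perm (σ : Equiv.Perm (Fin s)) {c : ℤ × (Fin s → ℤ)} :
      WeylOrbit r c₀ c → WeylOrbit r c₀ (c.1, c.2 ∘ σ)
  | cremona (I : Finset (Fin s)) (hI : I.card = r + 1) {c : ℤ × (Fin s → ℤ)} :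
      WeylOrbit r c₀ c → WeylOrbit r c₀ (cremonaCurve r I c)

/-! ### Auxiliary summation lemmas -/

lemma sum_fin_filter (s : ℕ) (P : ℕ → Prop) [DecidablePred P] (g : ℕ → ℤ) :
    ∑ i ∈ Finset.univ.filter (fun i : Fin s => P i.val), g i.val
      = ∑ j ∈ (Finset.range s).filter P, g j := by
  rw [Finset.sum_filter, Finset.sum_filter,
    Fin.sum_univ_eq_sum_range (fun j => if P j then g j else 0)]

lemma card_fin_filter (s : ℕ) (P : ℕ → Prop) [DecidablePred P] :
    (Finset.univ.filter (fun i : Fin s => P i.val)).card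
      = ((Finset.range s).filter P).card := by
  rw [Finset.card_filter, Finset.card_filter,
    Fin.sum_univ_eq_sum_range (fun j => if P j then 1 else 0)]

lemma sum_Ico_const (f : ℕ → ℤ) (lo hi : ℕ) (v : ℤ)
    (h : ∀ j, lo ≤ j → j < hi → f j = v) :
    ∑ j ∈ Finset.Ico lo hi, f j = ((hi - lo : ℕ) : ℤ) * v := by
  rw [Finset.sum_congr rfl fun j hj => h j (Finset.mem_Ico.mp hj).1 (Finset.mem_Ico.mp hj).2,
    Finset.sum_const, Nat.card_Ico, nsmul_eq_mul]

lemma sum_Ico_special (f : ℕ → ℤ) (n e : ℕ) (v : ℤ) (he : e ≤ n)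
    (h : ∀ j, j < n → f j = v + (if j < e then 1 else 0)) :
    ∑ j ∈ Finset.Ico 0 n, f j = (n : ℤ) * v + e := by
  rw [← Finset.sum_Ico_consecutive f (Nat.zero_le e) he,
    sum_Ico_const f 0 e (v + 1)
      (fun j h0 hj => by rw [h j (lt_of_lt_of_le hj he), if_pos hj]),
    sum_Ico_const f e n v
      (fun j hej hjn => by rw [h j hjn, if_neg (by omega), add_zero])]
  have h1 : ((e - 0 : ℕ) : ℤ) = e := by omega
  have h2 : ((n - e : ℕ) : ℤ) = (n : ℤ) - e := by omega
  rw [h1, h2]; ring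

/-! ### Region classes: piecewise-constant multiplicity vectors with special points -/

/-- Piecewise multiplicity function: 4 regions `[0,n₁), [n₁,n₂), [n₂,n₃), [n₃,n₄)`
with values `v₁,…,v₄`, zero beyond `n₄`, and `e` special points (+1 offset) at the
start of region 1. -/
def rF (e n₁ n₂ n₃ n₄ : ℕ) (v₁ v₂ v₃ v₄ : ℤ) (j : ℕ) : ℤ :=
  if j < n₁ then v₁ + (if j < e then 1 else 0)
  else if j < n₂ then v₂
  else if j < n₃ then v₃
  else if j < n₄ then v₄
  else 0

/-- The corresponding curve class. -/
def rC (s e n₁ n₂ n₃ n₄ : ℕ) (d v₁ v₂ v₃ v₄ : ℤ) : ℤ × (Fin s → ℤ) :=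
  (d, fun i => rF e n₁ n₂ n₃ n₄ v₁ v₂ v₃ v₄ i.val)

lemma rF_sum_1 (e n₁ n₂ n₃ n₄ : ℕ) (v₁ v₂ v₃ v₄ : ℤ) (he : e ≤ n₁) :
    ∑ j ∈ Finset.Ico 0 n₁, rF e n₁ n₂ n₃ n₄ v₁ v₂ v₃ v₄ j = (n₁ : ℤ) * v₁ + e :=
  sum_Ico_special _ n₁ e v₁ he (fun j hj => by rw [rF, if_pos hj])

lemma rF_sum_2 (e n₁ n₂ n₃ n₄ : ℕ) (v₁ v₂ v₃ v₄ : ℤ) :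
    ∑ j ∈ Finset.Ico n₁ n₂, rF e n₁ n₂ n₃ n₄ v₁ v₂ v₃ v₄ j = ((n₂ - n₁ : ℕ) : ℤ) * v₂ :=
  sum_Ico_const _ _ _ _ (fun j h1 h2 => by rw [rF, if_neg (by omega), if_pos h2])

lemma rF_sum_3 (e n₁ n₂ n₃ n₄ : ℕ) (v₁ v₂ v₃ v₄ : ℤ) (h12 : n₁ ≤ n₂) :
    ∑ j ∈ Finset.Ico n₂ n₃, rF e n₁ n₂ n₃ n₄ v₁ v₂ v₃ v₄ j = ((n₃ - n₂ : ℕ) : ℤ) * v₃ :=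
  sum_Ico_const _ _ _ _ (fun j h1 h2 => by
    rw [rF, if_neg (by omega), if_neg (by omega), if_pos h2])

lemma rF_sum_4 (e n₁ n₂ n₃ n₄ : ℕ) (v₁ v₂ v₃ v₄ : ℤ) (h12 : n₁ ≤ n₂) (h23 : n₂ ≤ n₃) :
    ∑ j ∈ Finset.Ico n₃ n₄, rF e n₁ n₂ n₃ n₄ v₁ v₂ v₃ v₄ j = ((n₄ - n₃ : ℕ) : ℤ) * v₄ :=
  sum_Ico_const _ _ _ _ (fun j h1 h2 => by
    rw [rF, if_neg (by omega), if_neg (by omega), if_neg (by omega), if_pos h2])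

/-! ### Cremona steps on region classes -/

/-- Cremona on regions 2∪3∪4. -/
lemma step_234 (r s : ℕ) (c₀ : ℤ × (Fin s → ℤ)) (e n₁ n₂ n₃ n₄ : ℕ)
    (h12 : n₁ ≤ n₂) (h23 : n₂ ≤ n₃) (h34 : n₃ ≤ n₄) (h4s : n₄ ≤ s)
    (hcard : n₄ - n₁ = r + 1)
    (d v₁ v₂ v₃ v₄ t : ℤ)
    (ht : t = d - (((n₂ - n₁ : ℕ) : ℤ) * v₂ + ((n₃ - n₂ : ℕ) : ℤ) * v₃
        + ((n₄ - n₃ : ℕ) : ℤ) * v₄))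
    (h : WeylOrbit r c₀ (rC s e n₁ n₂ n₃ n₄ d v₁ v₂ v₃ v₄)) :
    WeylOrbit r c₀ (rC s e n₁ n₂ n₃ n₄ (d + ((r : ℤ) - 1) * t) v₁ (v₂ + t) (v₃ + t) (v₄ + t)) := by
  classical
  set I : Finset (Fin s) := Finset.univ.filter (fun i : Fin s => n₁ ≤ i.val ∧ i.val < n₄)
    with hIdef
  have hfil : (Finset.range s).filter (fun j => n₁ ≤ j ∧ j < n₄) = Finset.Ico n₁ n₄ := by
    ext j
    simp only [Finset.mem_filter, Finset.mem_range, Finset.mem_Ico]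
    omega
  have hI : I.card = r + 1 := by
    rw [hIdef, card_fin_filter s (fun j => n₁ ≤ j ∧ j < n₄), hfil, Nat.card_Ico]; omega
  have hsum : ∑ i ∈ I, rF e n₁ n₂ n₃ n₄ v₁ v₂ v₃ v₄ i.val
      = ((n₂ - n₁ : ℕ) : ℤ) * v₂ + ((n₃ - n₂ : ℕ) : ℤ) * v₃ + ((n₄ - n₃ : ℕ) : ℤ) * v₄ := by
    rw [hIdef, sum_fin_filter s (fun j => n₁ ≤ j ∧ j < n₄) (rF e n₁ n₂ n₃ n₄ v₁ v₂ v₃ v₄),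
      hfil,
      ← Finset.sum_Ico_consecutive _ (le_trans h12 h23) h34,
      ← Finset.sum_Ico_consecutive _ h12 h23,
      rF_sum_2, rF_sum_3 _ _ _ _ _ _ _ _ _ h12, rF_sum_4 _ _ _ _ _ _ _ _ _ h12 h23]
  have key := WeylOrbit.cremona I hI h
  have heq : cremonaCurve r I (rC s e n₁ n₂ n₃ n₄ d v₁ v₂ v₃ v₄)
      = rC s e n₁ n₂ n₃ n₄ (d + ((r : ℤ) - 1) * t) v₁ (v₂ + t) (v₃ + t) (v₄ + t) := by
    unfold cremonaCurve rC
    dsimp only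
    rw [hsum, ← ht]
    refine Prod.ext rfl ?_
    funext i
    rcases i with ⟨j, hjs⟩
    simp only [hIdef, Finset.mem_filter, Finset.mem_univ, true_and, rF]
    split_ifs <;> first | rfl | ring1 | omega
  rw [heq] at key
  exact key

/-- Cremona on regions 1∪3∪4. -/
lemma step_134 (r s : ℕ) (c₀ : ℤ × (Fin s → ℤ)) (e n₁ n₂ n₃ n₄ : ℕ)
    (h12 : n₁ ≤ n₂) (h23 : n₂ ≤ n₃) (h34 : n₃ ≤ n₄) (h4s : n₄ ≤ s) (he : e ≤ n₁)
    (hcard : n₁ + (n₄ - n₂) = r + 1)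
    (d v₁ v₂ v₃ v₄ t : ℤ)
    (ht : t = d - ((n₁ : ℤ) * v₁ + (e : ℤ) + ((n₃ - n₂ : ℕ) : ℤ) * v₃
        + ((n₄ - n₃ : ℕ) : ℤ) * v₄))
    (h : WeylOrbit r c₀ (rC s e n₁ n₂ n₃ n₄ d v₁ v₂ v₃ v₄)) :
    WeylOrbit r c₀ (rC s e n₁ n₂ n₃ n₄ (d + ((r : ℤ) - 1) * t) (v₁ + t) v₂ (v₃ + t) (v₄ + t)) := by
  classical
  set I : Finset (Fin s) :=
    Finset.univ.filter (fun i : Fin s => i.val < n₁ ∨ (n₂ ≤ i.val ∧ i.val < n₄)) with hIdef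
  have hfil : (Finset.range s).filter (fun j => j < n₁ ∨ (n₂ ≤ j ∧ j < n₄))
      = Finset.Ico 0 n₁ ∪ Finset.Ico n₂ n₄ := by
    ext j
    simp only [Finset.mem_filter, Finset.mem_range, Finset.mem_union, Finset.mem_Ico]
    omega
  have hd : Disjoint (Finset.Ico 0 n₁) (Finset.Ico n₂ n₄) := by
    rw [Finset.disjoint_left]
    intro a ha hb
    simp only [Finset.mem_Ico] at ha hb
    omega
  have hI : I.card = r + 1 := by
    rw [hIdef, card_fin_filter s (fun j => j < n₁ ∨ (n₂ ≤ j ∧ j < n₄)), hfil,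
      Finset.card_union_of_disjoint hd, Nat.card_Ico, Nat.card_Ico]
    omega
  have hsum : ∑ i ∈ I, rF e n₁ n₂ n₃ n₄ v₁ v₂ v₃ v₄ i.val
      = (n₁ : ℤ) * v₁ + (e : ℤ) + ((n₃ - n₂ : ℕ) : ℤ) * v₃ + ((n₄ - n₃ : ℕ) : ℤ) * v₄ := by
    rw [hIdef, sum_fin_filter s (fun j => j < n₁ ∨ (n₂ ≤ j ∧ j < n₄))
        (rF e n₁ n₂ n₃ n₄ v₁ v₂ v₃ v₄), hfil, Finset.sum_union hd,
      rF_sum_1 _ _ _ _ _ _ _ _ _ he,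
      ← Finset.sum_Ico_consecutive _ h23 h34,
      rF_sum_3 _ _ _ _ _ _ _ _ _ h12, rF_sum_4 _ _ _ _ _ _ _ _ _ h12 h23]
    ring
  have key := WeylOrbit.cremona I hI h
  have heq : cremonaCurve r I (rC s e n₁ n₂ n₃ n₄ d v₁ v₂ v₃ v₄)
      = rC s e n₁ n₂ n₃ n₄ (d + ((r : ℤ) - 1) * t) (v₁ + t) v₂ (v₃ + t) (v₄ + t) := by
    unfold cremonaCurve rC
    dsimp only
    rw [hsum, ← ht]
    refine Prod.ext rfl ?_
    funext i
    rcases i with ⟨j, hjs⟩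
    simp only [hIdef, Finset.mem_filter, Finset.mem_univ, true_and, rF]
    split_ifs <;> first | rfl | ring1 | omega
  rw [heq] at key
  exact key

/-- Cremona on regions 1∪2∪4. -/
lemma step_124 (r s : ℕ) (c₀ : ℤ × (Fin s → ℤ)) (e n₁ n₂ n₃ n₄ : ℕ)
    (h12 : n₁ ≤ n₂) (h23 : n₂ ≤ n₃) (h34 : n₃ ≤ n₄) (h4s : n₄ ≤ s) (he : e ≤ n₁)
    (hcard : n₂ + (n₄ - n₃) = r + 1)
    (d v₁ v₂ v₃ v₄ t : ℤ)
    (ht : t = d - ((n₁ : ℤ) * v₁ + (e : ℤ) + ((n₂ - n₁ : ℕ) : ℤ) * v₂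
        + ((n₄ - n₃ : ℕ) : ℤ) * v₄))
    (h : WeylOrbit r c₀ (rC s e n₁ n₂ n₃ n₄ d v₁ v₂ v₃ v₄)) :
    WeylOrbit r c₀ (rC s e n₁ n₂ n₃ n₄ (d + ((r : ℤ) - 1) * t) (v₁ + t) (v₂ + t) v₃ (v₄ + t)) := by
  classical
  set I : Finset (Fin s) :=
    Finset.univ.filter (fun i : Fin s => i.val < n₂ ∨ (n₃ ≤ i.val ∧ i.val < n₄)) with hIdef
  have hfil : (Finset.range s).filter (fun j => j < n₂ ∨ (n₃ ≤ j ∧ j < n₄))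
      = Finset.Ico 0 n₂ ∪ Finset.Ico n₃ n₄ := by
    ext j
    simp only [Finset.mem_filter, Finset.mem_range, Finset.mem_union, Finset.mem_Ico]
    omega
  have hd : Disjoint (Finset.Ico 0 n₂) (Finset.Ico n₃ n₄) := by
    rw [Finset.disjoint_left]
    intro a ha hb
    simp only [Finset.mem_Ico] at ha hb
    omega
  have hI : I.card = r + 1 := by
    rw [hIdef, card_fin_filter s (fun j => j < n₂ ∨ (n₃ ≤ j ∧ j < n₄)), hfil,
      Finset.card_union_of_disjoint hd, Nat.card_Ico, Nat.card_Ico]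
    omega
  have hsum : ∑ i ∈ I, rF e n₁ n₂ n₃ n₄ v₁ v₂ v₃ v₄ i.val
      = (n₁ : ℤ) * v₁ + (e : ℤ) + ((n₂ - n₁ : ℕ) : ℤ) * v₂ + ((n₄ - n₃ : ℕ) : ℤ) * v₄ := by
    rw [hIdef, sum_fin_filter s (fun j => j < n₂ ∨ (n₃ ≤ j ∧ j < n₄))
        (rF e n₁ n₂ n₃ n₄ v₁ v₂ v₃ v₄), hfil, Finset.sum_union hd,
      ← Finset.sum_Ico_consecutive _ (Nat.zero_le n₁) h12,
      rF_sum_1 _ _ _ _ _ _ _ _ _ he, rF_sum_2,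
      rF_sum_4 _ _ _ _ _ _ _ _ _ h12 h23]
  have key := WeylOrbit.cremona I hI h
  have heq : cremonaCurve r I (rC s e n₁ n₂ n₃ n₄ d v₁ v₂ v₃ v₄)
      = rC s e n₁ n₂ n₃ n₄ (d + ((r : ℤ) - 1) * t) (v₁ + t) (v₂ + t) v₃ (v₄ + t) := by
    unfold cremonaCurve rC
    dsimp only
    rw [hsum, ← ht]
    refine Prod.ext rfl ?_
    funext i
    rcases i with ⟨j, hjs⟩
    simp only [hIdef, Finset.mem_filter, Finset.mem_univ, true_and, rF]
    split_ifs <;> first | rfl | ring1 | omega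
  rw [heq] at key
  exact key

/-- Cremona on region 1 alone. -/
lemma step_1 (r s : ℕ) (c₀ : ℤ × (Fin s → ℤ)) (e n₁ n₂ n₃ n₄ : ℕ)
    (h12 : n₁ ≤ n₂) (h23 : n₂ ≤ n₃) (h34 : n₃ ≤ n₄) (h4s : n₄ ≤ s) (he : e ≤ n₁)
    (hcard : n₁ = r + 1)
    (d v₁ v₂ v₃ v₄ t : ℤ)
    (ht : t = d - ((n₁ : ℤ) * v₁ + (e : ℤ)))
    (h : WeylOrbit r c₀ (rC s e n₁ n₂ n₃ n₄ d v₁ v₂ v₃ v₄)) :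
    WeylOrbit r c₀ (rC s e n₁ n₂ n₃ n₄ (d + ((r : ℤ) - 1) * t) (v₁ + t) v₂ v₃ v₄) := by
  classical
  set I : Finset (Fin s) := Finset.univ.filter (fun i : Fin s => i.val < n₁) with hIdef
  have hfil : (Finset.range s).filter (fun j => j < n₁) = Finset.Ico 0 n₁ := by
    ext j
    simp only [Finset.mem_filter, Finset.mem_range, Finset.mem_Ico]
    omega
  have hI : I.card = r + 1 := by
    rw [hIdef, card_fin_filter s (fun j => j < n₁), hfil, Nat.card_Ico]; omega
  have hsum : ∑ i ∈ I, rF e n₁ n₂ n₃ n₄ v₁ v₂ v₃ v₄ i.val = (n₁ : ℤ) * v₁ + (e : ℤ) := by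
    rw [hIdef, sum_fin_filter s (fun j => j < n₁) (rF e n₁ n₂ n₃ n₄ v₁ v₂ v₃ v₄), hfil,
      rF_sum_1 _ _ _ _ _ _ _ _ _ he]
  have key := WeylOrbit.cremona I hI h
  have heq : cremonaCurve r I (rC s e n₁ n₂ n₃ n₄ d v₁ v₂ v₃ v₄)
      = rC s e n₁ n₂ n₃ n₄ (d + ((r : ℤ) - 1) * t) (v₁ + t) v₂ v₃ v₄ := by
    unfold cremonaCurve rC
    dsimp only
    rw [hsum, ← ht]
    refine Prod.ext rfl ?_
    funext i
    rcases i with ⟨j, hjs⟩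
    simp only [hIdef, Finset.mem_filter, Finset.mem_univ, true_and, rF]
    split_ifs <;> first | rfl | ring1 | omega
  rw [heq] at key
  exact key

/-- Cremona on region 2 alone. -/
lemma step_2 (r s : ℕ) (c₀ : ℤ × (Fin s → ℤ)) (e n₁ n₂ n₃ n₄ : ℕ)
    (h12 : n₁ ≤ n₂) (h23 : n₂ ≤ n₃) (h34 : n₃ ≤ n₄) (h4s : n₄ ≤ s)
    (hcard : n₂ - n₁ = r + 1)
    (d v₁ v₂ v₃ v₄ t : ℤ)
    (ht : t = d - ((n₂ - n₁ : ℕ) : ℤ) * v₂)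
    (h : WeylOrbit r c₀ (rC s e n₁ n₂ n₃ n₄ d v₁ v₂ v₃ v₄)) :
    WeylOrbit r c₀ (rC s e n₁ n₂ n₃ n₄ (d + ((r : ℤ) - 1) * t) v₁ (v₂ + t) v₃ v₄) := by
  classical
  set I : Finset (Fin s) := Finset.univ.filter (fun i : Fin s => n₁ ≤ i.val ∧ i.val < n₂)
    with hIdef
  have hfil : (Finset.range s).filter (fun j => n₁ ≤ j ∧ j < n₂) = Finset.Ico n₁ n₂ := by
    ext j
    simp only [Finset.mem_filter, Finset.mem_range, Finset.mem_Ico]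
    omega
  have hI : I.card = r + 1 := by
    rw [hIdef, card_fin_filter s (fun j => n₁ ≤ j ∧ j < n₂), hfil, Nat.card_Ico]; omega
  have hsum : ∑ i ∈ I, rF e n₁ n₂ n₃ n₄ v₁ v₂ v₃ v₄ i.val = ((n₂ - n₁ : ℕ) : ℤ) * v₂ := by
    rw [hIdef, sum_fin_filter s (fun j => n₁ ≤ j ∧ j < n₂) (rF e n₁ n₂ n₃ n₄ v₁ v₂ v₃ v₄),
      hfil, rF_sum_2]
  have key := WeylOrbit.cremona I hI h
  have heq : cremonaCurve r I (rC s e n₁ n₂ n₃ n₄ d v₁ v₂ v₃ v₄)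
      = rC s e n₁ n₂ n₃ n₄ (d + ((r : ℤ) - 1) * t) v₁ (v₂ + t) v₃ v₄ := by
    unfold cremonaCurve rC
    dsimp only
    rw [hsum, ← ht]
    refine Prod.ext rfl ?_
    funext i
    rcases i with ⟨j, hjs⟩
    simp only [hIdef, Finset.mem_filter, Finset.mem_univ, true_and, rF]
    split_ifs <;> first | rfl | ring1 | omega
  rw [heq] at key
  exact key

/-- Cremona on region 3 alone. -/
lemma step_3 (r s : ℕ) (c₀ : ℤ × (Fin s → ℤ)) (e n₁ n₂ n₃ n₄ : ℕ)
    (h12 : n₁ ≤ n₂) (h23 : n₂ ≤ n₃) (h34 : n₃ ≤ n₄) (h4s : n₄ ≤ s)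
    (hcard : n₃ - n₂ = r + 1)
    (d v₁ v₂ v₃ v₄ t : ℤ)
    (ht : t = d - ((n₃ - n₂ : ℕ) : ℤ) * v₃)
    (h : WeylOrbit r c₀ (rC s e n₁ n₂ n₃ n₄ d v₁ v₂ v₃ v₄)) :
    WeylOrbit r c₀ (rC s e n₁ n₂ n₃ n₄ (d + ((r : ℤ) - 1) * t) v₁ v₂ (v₃ + t) v₄) := by
  classical
  set I : Finset (Fin s) := Finset.univ.filter (fun i : Fin s => n₂ ≤ i.val ∧ i.val < n₃)
    with hIdef
  have hfil : (Finset.range s).filter (fun j => n₂ ≤ j ∧ j < n₃) = Finset.Ico n₂ n₃ := by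
    ext j
    simp only [Finset.mem_filter, Finset.mem_range, Finset.mem_Ico]
    omega
  have hI : I.card = r + 1 := by
    rw [hIdef, card_fin_filter s (fun j => n₂ ≤ j ∧ j < n₃), hfil, Nat.card_Ico]; omega
  have hsum : ∑ i ∈ I, rF e n₁ n₂ n₃ n₄ v₁ v₂ v₃ v₄ i.val = ((n₃ - n₂ : ℕ) : ℤ) * v₃ := by
    rw [hIdef, sum_fin_filter s (fun j => n₂ ≤ j ∧ j < n₃) (rF e n₁ n₂ n₃ n₄ v₁ v₂ v₃ v₄),
      hfil, rF_sum_3 _ _ _ _ _ _ _ _ _ h12]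
  have key := WeylOrbit.cremona I hI h
  have heq : cremonaCurve r I (rC s e n₁ n₂ n₃ n₄ d v₁ v₂ v₃ v₄)
      = rC s e n₁ n₂ n₃ n₄ (d + ((r : ℤ) - 1) * t) v₁ v₂ (v₃ + t) v₄ := by
    unfold cremonaCurve rC
    dsimp only
    rw [hsum, ← ht]
    refine Prod.ext rfl ?_
    funext i
    rcases i with ⟨j, hjs⟩
    simp only [hIdef, Finset.mem_filter, Finset.mem_univ, true_and, rF]
    split_ifs <;> first | rfl | ring1 | omega
  rw [heq] at key
  exact key

/-! ### The three schemes -/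

/-- Scheme 1 (r ≥ 3, s ≥ r+5): regions B = [0,4) (with `e` special points),
A = [4,8), K = [8,r+5); alternate Cremona on A∪K and B∪K. -/
lemma scheme1_orbit (r s e : ℕ) (hr : 3 ≤ r) (hs : r + 5 ≤ s) (he : e ≤ 4) (m : ℕ) :
    WeylOrbit r (rC s e 4 8 8 (r+5) 1 0 0 0 0)
      (rC s e 4 8 8 (r+5)
        (1 + ((r:ℤ)-1) * ((2-(e:ℤ))*m*(2*m-1) + 2*m))
        ((2-(e:ℤ))*m*m + m)
        ((2-(e:ℤ))*(m*m - m) + m)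
        ((2-(e:ℤ))*m*(2*m-1) + 2*m)
        ((2-(e:ℤ))*m*(2*m-1) + 2*m)) := by
  induction m with
  | zero =>
    convert WeylOrbit.base using 2 <;> push_cast <;> ring
  | succ m ih =>
    have c1 : ((8-4:ℕ):ℤ) = 4 := by norm_num
    have c2 : ((8-8:ℕ):ℤ) = 0 := by norm_num
    have c3 : ((r+5-8:ℕ):ℤ) = (r:ℤ)-3 := by omega
    have c4 : ((4:ℕ):ℤ) = 4 := by norm_num
    have h1 := step_234 r s _ e 4 8 8 (r+5) (by omega) (by omega) (by omega) (by omega)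
      (by omega) _ _ _ _ _ (1 + 4*(m:ℤ) - 2*(e:ℤ)*m)
      (by simp only [c1, c2, c3]; push_cast; ring) ih
    have h2 := step_134 r s _ e 4 8 8 (r+5) (by omega) (by omega) (by omega) (by omega)
      (by omega) (by omega) _ _ _ _ _ (3 + 4*(m:ℤ) - (e:ℤ) - 2*(e:ℤ)*m)
      (by simp only [c1, c2, c3, c4]; push_cast; ring) h1
    convert h2 using 2 <;> push_cast <;> ring

/-- Scheme 2 (r ≥ 5, s ≥ r+4): regions C = [0,3) (with `e` special points),
A = [3,6), B = [6,9), K = [9,r+4); cycle Cremona on K∪A∪B, K∪B∪C, K∪C∪A. -/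
lemma scheme2_orbit (r s e : ℕ) (hr : 5 ≤ r) (hs : r + 4 ≤ s) (he : e ≤ 3) (m : ℕ) :
    WeylOrbit r (rC s e 3 6 9 (r+4) 1 0 0 0 0)
      (rC s e 3 6 9 (r+4)
        (1 + ((r:ℤ)-1) * ((27-18*(e:ℤ))*m*m + 3*(e:ℤ)*m))
        ((18-12*(e:ℤ))*m*m + 3*m)
        ((18-12*(e:ℤ))*m*m + 2*(e:ℤ)*m)
        ((18-12*(e:ℤ))*m*m + (4*(e:ℤ)-3)*m)
        ((27-18*(e:ℤ))*m*m + 3*(e:ℤ)*m)) := by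
  induction m with
  | zero =>
    convert WeylOrbit.base using 2 <;> push_cast <;> ring
  | succ m ih =>
    have c1 : ((6-3:ℕ):ℤ) = 3 := by norm_num
    have c2 : ((9-6:ℕ):ℤ) = 3 := by norm_num
    have c3 : ((r+4-9:ℕ):ℤ) = (r:ℤ)-5 := by omega
    have c4 : ((3:ℕ):ℤ) = 3 := by norm_num
    have h1 := step_234 r s _ e 3 6 9 (r+4) (by omega) (by omega) (by omega) (by omega)
      (by omega) _ _ _ _ _ (1 + 9*(m:ℤ) - 6*(e:ℤ)*m)
      (by simp only [c1, c2, c3]; push_cast; ring) ih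
    have h2 := step_134 r s _ e 3 6 9 (r+4) (by omega) (by omega) (by omega) (by omega)
      (by omega) (by omega) _ _ _ _ _ (2 + 9*(m:ℤ) - (e:ℤ) - 6*(e:ℤ)*m)
      (by simp only [c1, c2, c3, c4]; push_cast; ring) h1
    have h3 := step_124 r s _ e 3 6 9 (r+4) (by omega) (by omega) (by omega) (by omega)
      (by omega) (by omega) _ _ _ _ _ (4 + 9*(m:ℤ) - 2*(e:ℤ) - 6*(e:ℤ)*m)
      (by simp only [c1, c2, c3, c4]; push_cast; ring) h2
    have h4 := step_234 r s _ e 3 6 9 (r+4) (by omega) (by omega) (by omega) (by omega)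
      (by omega) _ _ _ _ _ (5 + 9*(m:ℤ) - 3*(e:ℤ) - 6*(e:ℤ)*m)
      (by simp only [c1, c2, c3]; push_cast; ring) h3
    have h5 := step_134 r s _ e 3 6 9 (r+4) (by omega) (by omega) (by omega) (by omega)
      (by omega) (by omega) _ _ _ _ _ (7 + 9*(m:ℤ) - 4*(e:ℤ) - 6*(e:ℤ)*m)
      (by simp only [c1, c2, c3, c4]; push_cast; ring) h4
    have h6 := step_124 r s _ e 3 6 9 (r+4) (by omega) (by omega) (by omega) (by omega)
      (by omega) (by omega) _ _ _ _ _ (8 + 9*(m:ℤ) - 5*(e:ℤ) - 6*(e:ℤ)*m)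
      (by simp only [c1, c2, c3, c4]; push_cast; ring) h5
    convert h6 using 2 <;> push_cast <;> ring

/-- Scheme 3 (r = 2, s ≥ 9): regions C = [0,3) (with `e` special points),
A = [3,6), B = [6,9); cycle Cremona on A, B, C. -/
lemma scheme3_orbit (s e : ℕ) (hs : 9 ≤ s) (he : e ≤ 3) (m : ℕ) :
    WeylOrbit 2 (rC s e 3 6 9 9 1 0 0 0 0)
      (rC s e 3 6 9 9
        (1 + (27-9*(e:ℤ))*m*m + 3*(e:ℤ)*m)
        ((9-3*(e:ℤ))*m*m + 3*m)
        ((9-3*(e:ℤ))*m*m + (2*(e:ℤ)-3)*m)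
        ((9-3*(e:ℤ))*m*m + (e:ℤ)*m)
        0) := by
  induction m with
  | zero =>
    convert WeylOrbit.base using 2 <;> push_cast <;> ring
  | succ m ih =>
    have c1 : ((6-3:ℕ):ℤ) = 3 := by norm_num
    have c2 : ((9-6:ℕ):ℤ) = 3 := by norm_num
    have c4 : ((3:ℕ):ℤ) = 3 := by norm_num
    have h1 := step_2 2 s _ e 3 6 9 9 (by omega) (by omega) (by omega) (by omega)
      (by omega) _ _ _ _ _ (1 + 9*(m:ℤ) - 3*(e:ℤ)*m)
      (by simp only [c1]; push_cast; ring) ih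
    have h2 := step_3 2 s _ e 3 6 9 9 (by omega) (by omega) (by omega) (by omega)
      (by omega) _ _ _ _ _ (2 + 9*(m:ℤ) - 3*(e:ℤ)*m)
      (by simp only [c2]; push_cast; ring) h1
    have h3 := step_1 2 s _ e 3 6 9 9 (by omega) (by omega) (by omega) (by omega)
      (by omega) (by omega) _ _ _ _ _ (4 + 9*(m:ℤ) - (e:ℤ) - 3*(e:ℤ)*m)
      (by simp only [c4]; push_cast; ring) h2
    have h4 := step_2 2 s _ e 3 6 9 9 (by omega) (by omega) (by omega) (by omega)
      (by omega) _ _ _ _ _ (5 + 9*(m:ℤ) - (e:ℤ) - 3*(e:ℤ)*m)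
      (by simp only [c1]; push_cast; ring) h3
    have h5 := step_3 2 s _ e 3 6 9 9 (by omega) (by omega) (by omega) (by omega)
      (by omega) _ _ _ _ _ (7 + 9*(m:ℤ) - 2*(e:ℤ) - 3*(e:ℤ)*m)
      (by simp only [c2]; push_cast; ring) h4
    have h6 := step_1 2 s _ e 3 6 9 9 (by omega) (by omega) (by omega) (by omega)
      (by omega) (by omega) _ _ _ _ _ (8 + 9*(m:ℤ) - 2*(e:ℤ) - 3*(e:ℤ)*m)
      (by simp only [c4]; push_cast; ring) h5
    convert h6 using 2 <;> push_cast <;> ring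

/-! ### Infinitude of the orbits -/

lemma rC_fst (s e n₁ n₂ n₃ n₄ : ℕ) (d v₁ v₂ v₃ v₄ : ℤ) :
    (rC s e n₁ n₂ n₃ n₄ d v₁ v₂ v₃ v₄).1 = d := rfl

/-- The starting region class is the class of a line through `e` points. -/
lemma rC_zero (s e n₁ n₂ n₃ n₄ : ℕ) (he : e ≤ n₁) :
    rC s e n₁ n₂ n₃ n₄ 1 0 0 0 0
      = ((1 : ℤ), fun i : Fin s => if (i : ℕ) < e then 1 else 0) := by
  unfold rC rF
  refine Prod.ext rfl ?_
  funext i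
  rcases i with ⟨j, hj⟩
  dsimp only
  split_ifs <;> omega

lemma scheme1_infinite (r s e : ℕ) (hr : 3 ≤ r) (hs : r + 5 ≤ s) (he : e ≤ 2) :
    {c : ℤ × (Fin s → ℤ) | WeylOrbit r (rC s e 4 8 8 (r+5) 1 0 0 0 0) c}.Infinite := by
  apply Set.infinite_of_injective_forall_mem
    (f := fun m : ℕ => rC s e 4 8 8 (r+5)
      (1 + ((r:ℤ)-1) * ((2-(e:ℤ))*m*(2*m-1) + 2*m))
      ((2-(e:ℤ))*m*m + m)
      ((2-(e:ℤ))*(m*m - m) + m)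
      ((2-(e:ℤ))*m*(2*m-1) + 2*m)
      ((2-(e:ℤ))*m*(2*m-1) + 2*m))
  · have hmono : StrictMono (fun m : ℕ =>
        1 + ((r:ℤ)-1) * ((2-(e:ℤ))*m*(2*m-1) + 2*m)) := by
      apply strictMono_nat_of_lt_succ
      intro n
      have hE : (0:ℤ) ≤ 2 - (e:ℤ) := by omega
      have hR : (2:ℤ) ≤ (r:ℤ) - 1 := by omega
      have hN : (0:ℤ) ≤ (n:ℤ) := by positivity
      have key : (1 + ((r:ℤ)-1) * ((2-(e:ℤ))*(n+1)*(2*(n+1)-1) + 2*(n+1)))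
          - (1 + ((r:ℤ)-1) * ((2-(e:ℤ))*n*(2*n-1) + 2*n))
          = ((r:ℤ)-1) * ((2-(e:ℤ))*(4*n+1) + 2) := by ring
      have pos : (0:ℤ) < ((r:ℤ)-1) * ((2-(e:ℤ))*(4*n+1) + 2) := by
        have h1 : (0:ℤ) < (2-(e:ℤ))*(4*n+1) + 2 := by nlinarith
        nlinarith
      push_cast
      nlinarith [key, pos]
    intro a b hab
    have h1 : (1 + ((r:ℤ)-1) * ((2-(e:ℤ))*a*(2*a-1) + 2*a))
        = (1 + ((r:ℤ)-1) * ((2-(e:ℤ))*b*(2*b-1) + 2*b)) := congrArg Prod.fst hab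
    exact hmono.injective h1
  · intro m
    exact scheme1_orbit r s e hr hs (by omega) m

lemma scheme2_infinite (r s e : ℕ) (hr : 5 ≤ r) (hs : r + 4 ≤ s) (he : e ≤ 1) :
    {c : ℤ × (Fin s → ℤ) | WeylOrbit r (rC s e 3 6 9 (r+4) 1 0 0 0 0) c}.Infinite := by
  apply Set.infinite_of_injective_forall_mem
    (f := fun m : ℕ => rC s e 3 6 9 (r+4)
      (1 + ((r:ℤ)-1) * ((27-18*(e:ℤ))*m*m + 3*(e:ℤ)*m))
      ((18-12*(e:ℤ))*m*m + 3*m)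
      ((18-12*(e:ℤ))*m*m + 2*(e:ℤ)*m)
      ((18-12*(e:ℤ))*m*m + (4*(e:ℤ)-3)*m)
      ((27-18*(e:ℤ))*m*m + 3*(e:ℤ)*m))
  · have hmono : StrictMono (fun m : ℕ =>
        1 + ((r:ℤ)-1) * ((27-18*(e:ℤ))*m*m + 3*(e:ℤ)*m)) := by
      apply strictMono_nat_of_lt_succ
      intro n
      have hE : (9:ℤ) ≤ 27 - 18*(e:ℤ) := by omega
      have hE0 : (0:ℤ) ≤ (e:ℤ) := by positivity
      have hR : (4:ℤ) ≤ (r:ℤ) - 1 := by omega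
      have hN : (0:ℤ) ≤ (n:ℤ) := by positivity
      have key : (1 + ((r:ℤ)-1) * ((27-18*(e:ℤ))*(n+1)*(n+1) + 3*(e:ℤ)*(n+1)))
          - (1 + ((r:ℤ)-1) * ((27-18*(e:ℤ))*n*n + 3*(e:ℤ)*n))
          = ((r:ℤ)-1) * ((27-18*(e:ℤ))*(2*n+1) + 3*(e:ℤ)) := by ring
      have pos : (0:ℤ) < ((r:ℤ)-1) * ((27-18*(e:ℤ))*(2*n+1) + 3*(e:ℤ)) := by
        have h1 : (0:ℤ) < (27-18*(e:ℤ))*(2*n+1) + 3*(e:ℤ) := by nlinarith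
        nlinarith
      push_cast
      nlinarith [key, pos]
    intro a b hab
    have h1 : (1 + ((r:ℤ)-1) * ((27-18*(e:ℤ))*a*a + 3*(e:ℤ)*a))
        = (1 + ((r:ℤ)-1) * ((27-18*(e:ℤ))*b*b + 3*(e:ℤ)*b)) := congrArg Prod.fst hab
    exact hmono.injective h1
  · intro m
    exact scheme2_orbit r s e hr hs (by omega) m

lemma scheme3_infinite (s e : ℕ) (hs : 9 ≤ s) (he : e ≤ 1) :
    {c : ℤ × (Fin s → ℤ) | WeylOrbit 2 (rC s e 3 6 9 9 1 0 0 0 0) c}.Infinite := by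
  apply Set.infinite_of_injective_forall_mem
    (f := fun m : ℕ => rC s e 3 6 9 9
      (1 + (27-9*(e:ℤ))*m*m + 3*(e:ℤ)*m)
      ((9-3*(e:ℤ))*m*m + 3*m)
      ((9-3*(e:ℤ))*m*m + (2*(e:ℤ)-3)*m)
      ((9-3*(e:ℤ))*m*m + (e:ℤ)*m)
      0)
  · have hmono : StrictMono (fun m : ℕ =>
        1 + (27-9*(e:ℤ))*m*m + 3*(e:ℤ)*m) := by
      apply strictMono_nat_of_lt_succ
      intro n
      have hE : (18:ℤ) ≤ 27 - 9*(e:ℤ) := by omega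
      have hE0 : (0:ℤ) ≤ (e:ℤ) := by positivity
      have hN : (0:ℤ) ≤ (n:ℤ) := by positivity
      push_cast
      nlinarith
    intro a b hab
    have h1 : (1 + (27-9*(e:ℤ))*a*a + 3*(e:ℤ)*a)
        = (1 + (27-9*(e:ℤ))*b*b + 3*(e:ℤ)*b) := congrArg Prod.fst hab
    exact hmono.injective h1
  · intro m
    exact scheme3_orbit s e hs (by omega) m

/-! ### Main theorem -/

lemma class_e0 (s : ℕ) :
    ((1 : ℤ), fun i : Fin s => if (i : ℕ) < 0 then (1:ℤ) else 0)
      = ((1 : ℤ), fun _ : Fin s => (0 : ℤ)) := by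
  refine Prod.ext rfl ?_
  funext i
  simp

lemma class_e1 (s : ℕ) :
    ((1 : ℤ), fun i : Fin s => if (i : ℕ) < 1 then (1:ℤ) else 0)
      = ((1 : ℤ), fun i : Fin s => if (i : ℕ) = 0 then (1:ℤ) else 0) := by
  refine Prod.ext rfl ?_
  funext i
  simp [Nat.lt_one_iff]

/-- (a) If r ≥ 5 and s ≥ r+4, or r ∈ {3,4} and s ≥ r+5, or r = 2 and s ≥ 9, the
Weyl orbit of the general line class `h = (1, (0,…,0))` is infinite and the Weyl orbit
of the class `h − e₁ = (1, (1,0,…,0))` of a line through one point is infinite.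
(b) If r ≥ 3 and s ≥ r+5, the Weyl orbit of the class
`h − e₁ − e₂ = (1, (1,1,0,…,0))` of a line through two points is infinite. -/
theorem weyl_orbits_infinite (r s : ℕ) (hr : 2 ≤ r) :
    (((5 ≤ r ∧ r + 4 ≤ s) ∨ ((r = 3 ∨ r = 4) ∧ r + 5 ≤ s) ∨ (r = 2 ∧ 9 ≤ s)) →
      {c : ℤ × (Fin s → ℤ) |
          WeylOrbit r ((1 : ℤ), fun _ => (0 : ℤ)) c}.Infinite ∧
      {c : ℤ × (Fin s → ℤ) |
          WeylOrbit r ((1 : ℤ), fun i => if (i : ℕ) = 0 then 1 else 0) c}.Infinite) ∧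
    ((3 ≤ r ∧ r + 5 ≤ s) →
      {c : ℤ × (Fin s → ℤ) |
          WeylOrbit r ((1 : ℤ), fun i => if (i : ℕ) < 2 then 1 else 0) c}.Infinite) := by
  constructor
  · rintro (⟨h5, hs⟩ | ⟨h34, hs⟩ | ⟨h2, hs⟩)
    · constructor
      · have h := scheme2_infinite r s 0 h5 hs (by norm_num)
        rwa [rC_zero s 0 3 6 9 (r+4) (by norm_num), class_e0 s] at h
      · have h := scheme2_infinite r s 1 h5 hs le_rfl
        rwa [rC_zero s 1 3 6 9 (r+4) (by norm_num), class_e1 s] at h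
    · have hr3 : 3 ≤ r := by omega
      constructor
      · have h := scheme1_infinite r s 0 hr3 hs (by norm_num)
        rwa [rC_zero s 0 4 8 8 (r+5) (by norm_num), class_e0 s] at h
      · have h := scheme1_infinite r s 1 hr3 hs (by norm_num)
        rwa [rC_zero s 1 4 8 8 (r+5) (by norm_num), class_e1 s] at h
    · subst h2
      constructor
      · have h := scheme3_infinite s 0 hs (by norm_num)
        rwa [rC_zero s 0 3 6 9 9 (by norm_num), class_e0 s] at h
      · have h := scheme3_infinite s 1 hs le_rfl
        rwa [rC_zero s 1 3 6 9 9 (by norm_num), class_e1 s] at h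
  · rintro ⟨hr3, hs⟩
    have h := scheme1_infinite r s 2 hr3 hs le_rfl
    rwa [rC_zero s 2 4 8 8 (r+5) (by norm_num)] at h
end
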